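/- arXiv:1310.3352 — 2 statements merged into one kernel-verified Lean document; each statement's English description precedes it below -/
import Mathlib

section
/- Let Φ(t) = t·log(e+t)·log log log(e^{e^e}+t). Then for every p ∈ (1,∞), C_Φ((p+1)/2) is comparable to (p/(p-1))² · log log(e^e + 1/(p-1)), with implied constants independent of p. -/
open MeasureTheory ENNReal Set
noncomputable section

abbrev Rn (n : ℕ) := Fin n → ℝ

/-- Axis-parallel cube with center `c` and half-sidelength `r`. -/
def cube (n : ℕ) (c : Rn n) (r : ℝ) : Set (Rn n) := {y | ∀ i, |y i - c i| ≤ r}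

/-- Hardy–Littlewood maximal operator over cubes (ℝ≥0∞-valued input). -/
def Mop (n : ℕ) (f : Rn n → ℝ≥0∞) (x : Rn n) : ℝ≥0∞ :=
  ⨆ (c : Rn n) (r : ℝ) (_ : 0 < r) (_ : x ∈ cube n c r),
    (volume (cube n c r))⁻¹ * ∫⁻ y in cube n c r, f y

/-- Hardy–Littlewood maximal operator of a real function. -/
def MopR (n : ℕ) (f : Rn n → ℝ) (x : Rn n) : ℝ≥0∞ :=
  Mop n (fun y => ENNReal.ofReal |f y|) x

/-- Muckenhoupt `A_p` constant. -/
def ApConst (n : ℕ) (p : ℝ) (w : Rn n → ℝ) : ℝ≥0∞ :=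
  ⨆ (c : Rn n) (r : ℝ) (_ : 0 < r),
    ((volume (cube n c r))⁻¹ * ∫⁻ y in cube n c r, ENNReal.ofReal (w y)) *
      ((volume (cube n c r))⁻¹ *
        ∫⁻ y in cube n c r, (ENNReal.ofReal (w y)) ^ (-(1 / (p - 1)))) ^ (p - 1)

/-- Muckenhoupt `A_1` constant. -/
def A1Const (n : ℕ) (w : Rn n → ℝ) : ℝ≥0∞ :=
  ⨆ (c : Rn n) (r : ℝ) (_ : 0 < r),
    ((volume (cube n c r))⁻¹ * ∫⁻ y in cube n c r, ENNReal.ofReal (w y)) *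
      (essInf (fun y => ENNReal.ofReal (w y)) (volume.restrict (cube n c r)))⁻¹

/-- Fujii–Wilson `A_∞` constant. -/
def AinfConst (n : ℕ) (w : Rn n → ℝ) : ℝ≥0∞ :=
  ⨆ (c : Rn n) (r : ℝ) (_ : 0 < r),
    (∫⁻ y in cube n c r, ENNReal.ofReal (w y))⁻¹ *
      ∫⁻ x in cube n c r, Mop n ((cube n c r).indicator (fun y => ENNReal.ofReal (w y))) x

/-- Young function predicate. -/
def IsYoung (Φ : ℝ → ℝ) : Prop :=
  ContinuousOn Φ (Ici 0) ∧ ConvexOn ℝ (Ici 0) Φ ∧ MonotoneOn Φ (Ici 0) ∧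
    Φ 0 = 0 ∧ Filter.Tendsto Φ Filter.atTop Filter.atTop

/-- Mean Luxemburg norm of `f` on `Q`. -/
def luxNorm {n : ℕ} (Φ : ℝ → ℝ) (f : Rn n → ℝ) (Q : Set (Rn n)) : ℝ :=
  sInf {l : ℝ | 0 < l ∧
    (volume Q)⁻¹ * (∫⁻ x in Q, ENNReal.ofReal (Φ (|f x| / l))) ≤ 1}

/-- Weighted mean Luxemburg norm of `f` on `Q`. -/
def wLuxNorm {n : ℕ} (Φ : ℝ → ℝ) (w f : Rn n → ℝ) (Q : Set (Rn n)) : ℝ :=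
  sInf {l : ℝ | 0 < l ∧
    (∫⁻ x in Q, ENNReal.ofReal (w x))⁻¹ *
      (∫⁻ x in Q, ENNReal.ofReal (Φ (|f x| / l)) * ENNReal.ofReal (w x)) ≤ 1}

/-- Orlicz maximal function `M_Φ`. -/
def MOrlicz (n : ℕ) (Φ : ℝ → ℝ) (f : Rn n → ℝ) (x : Rn n) : ℝ≥0∞ :=
  ⨆ (c : Rn n) (r : ℝ) (_ : 0 < r) (_ : x ∈ cube n c r),
    ENNReal.ofReal (luxNorm Φ f (cube n c r))

/-- `B_p` constant of a Young function, ℝ≥0∞-valued. -/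
def BpConst (Φ : ℝ → ℝ) (p : ℝ) : ℝ≥0∞ :=
  (∫⁻ t in Ioi (1 : ℝ), ENNReal.ofReal (Φ t / t ^ (p + 1))) ^ (1 / p)

/-- `B_p` constant of a Young function, real-valued. -/
def BpConstR (Φ : ℝ → ℝ) (p : ℝ) : ℝ :=
  (∫ t in Ioi (1 : ℝ), Φ t / t ^ (p + 1)) ^ (1 / p)

/-- Weighted `L^p` "norm" of an ℝ≥0∞-valued function. -/
def wLp (n : ℕ) (p : ℝ) (f : Rn n → ℝ≥0∞) (w : Rn n → ℝ) : ℝ≥0∞ :=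
  (∫⁻ x, (f x) ^ p * ENNReal.ofReal (w x)) ^ (1 / p)

/-- Sparse family of sets. -/
def IsSparse (n : ℕ) (S : Set (Set (Rn n))) : Prop :=
  ∃ E : Set (Rn n) → Set (Rn n),
    (∀ Q ∈ S, E Q ⊆ Q ∧ MeasurableSet (E Q) ∧ volume Q ≤ 2 * volume (E Q)) ∧
    S.PairwiseDisjoint E

/-- Non-increasing rearrangement of `g` restricted to `Q`, evaluated at `t`. -/
def rearr {n : ℕ} (g : Rn n → ℝ) (Q : Set (Rn n)) (t : ℝ≥0∞) : ℝ :=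
  sInf {s : ℝ | 0 ≤ s ∧ volume {x ∈ Q | s < |g x|} ≤ t}

/-- Local mean oscillation `ω_λ(f;Q)`. -/
def osc {n : ℕ} (lam : ℝ) (f : Rn n → ℝ) (Q : Set (Rn n)) : ℝ :=
  ⨅ c : ℝ, rearr (fun x => f x - c) Q (ENNReal.ofReal lam * volume Q)

/-- The dyadic lattice generated by the cube with center `c`, half-side `r`. -/
def dyadicSub (n : ℕ) (c : Rn n) (r : ℝ) : Set (Set (Rn n)) :=
  {Q | ∃ (k : ℕ) (j : Fin n → ℕ), (∀ i, j i < 2 ^ k) ∧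
    Q = cube n (fun i => c i - r + (2 * (j i : ℝ) + 1) * (r / 2 ^ k)) (r / 2 ^ k)}

/-- `m` is a median value of `f` on `Q`. -/
def IsMedian {n : ℕ} (f : Rn n → ℝ) (Q : Set (Rn n)) (m : ℝ) : Prop :=
  volume {x ∈ Q | m < f x} ≤ volume Q / 2 ∧ volume {x ∈ Q | f x < m} ≤ volume Q / 2

/-!
With `δ = p - 1` and `q = (p + 1) / 2 = 1 + δ / 2`, the quantity `C_Φ(q)^q` is
`∫₁^∞ t^(-1-δ/2) log(e + t) logloglog(e^{e^e} + t) dt`.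

Upper bound: `log(e + t) ≤ log t + 2`, and splitting
`log t ≲ (e^e + δ log t)(e^e + 1/δ)` inside the triple logarithm gives
`logloglog(e^{e^e} + t) ≤ e^e + δ log t + loglog(e^e + 1/δ)`; the log-moments
`∫₁^∞ t^(-1-ε) (log t)^k dt = k! / ε^(k+1)` then bound the integral by `δ⁻² loglog(e^e + 1/δ)`.

Lower bound: for `t ≥ e^(1/δ)` the two logarithmic factors are at least `1/δ` and a fixed
fraction of `loglog(e^e + 1/δ)`, and the tail `∫_{e^(1/δ)}^∞ t^(-1-δ/2) dt` is of order `1/δ`.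

Passing to the `1/q`-th power costs only a bounded factor, since `(1/δ)^δ` stays bounded for
`δ ≤ 1`; for `δ > 1` both sides are of order one.
-/

open Real

def Φ (t : ℝ) : ℝ := t * log (exp 1 + t) * log (log (log (exp (exp (exp 1)) + t)))

def llog (x : ℝ) : ℝ := log (log (exp (exp 1) + x))

lemma le_log_exp_add (a : ℝ) {x : ℝ} (hx : 0 ≤ x) : a ≤ log (exp a + x) := by
  rw [le_log_iff_exp_le (by positivity)]
  linarith

lemma le_log_log_exp_exp_add (a : ℝ) {x : ℝ} (hx : 0 ≤ x) :
    a ≤ log (log (exp (exp a) + x)) := by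
  have h := le_log_exp_add (exp a) hx
  exact (le_log_iff_exp_le ((exp_pos a).trans_le h)).2 h

lemma one_le_llog {x : ℝ} (hx : 0 ≤ x) : 1 ≤ llog x :=
  le_log_log_exp_exp_add 1 hx

lemma one_le_log_log_log {t : ℝ} (ht : 0 ≤ t) :
    1 ≤ log (log (log (exp (exp (exp 1)) + t))) := by
  have h := le_log_log_exp_exp_add (exp 1) ht
  exact (le_log_iff_exp_le ((exp_pos 1).trans_le h)).2 h

lemma exp_exp_one_lt_sixteen : exp (exp 1) < 16 := by
  have h16 : (16 : ℝ) = exp (Real.log 2 * 4) := by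
    rw [exp_mul, exp_log two_pos]; norm_num
  rw [h16, exp_lt_exp]
  linarith [exp_one_lt_d9, log_two_gt_d9]

lemma llog_le {x : ℝ} (hx : 0 ≤ x) : llog x ≤ 15 + x := by
  have hpos : 0 < log (exp (exp 1) + x) := (exp_pos 1).trans_le (le_log_exp_add _ hx)
  have h1 := log_le_sub_one_of_pos hpos
  have h2 := log_le_sub_one_of_pos (show 0 < exp (exp 1) + x by positivity)
  unfold llog
  linarith [exp_exp_one_lt_sixteen]

lemma log_exp_one_add_le {t : ℝ} (ht : 1 ≤ t) : log (exp 1 + t) ≤ log t + 2 := by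
  have he2 : exp 1 + 1 ≤ exp 2 := by
    rw [show (2 : ℝ) = 1 + 1 by norm_num, exp_add]
    nlinarith [exp_one_gt_two]
  have h : exp 1 + t ≤ exp 2 * t := by nlinarith [exp_pos 1]
  calc log (exp 1 + t) ≤ log (exp 2 * t) := log_le_log (by positivity) h
    _ = log t + 2 := by rw [log_mul (exp_pos 2).ne' (by positivity), log_exp, add_comm]

lemma log_log_log_le {δ t : ℝ} (hδ : 0 < δ) (ht : 1 ≤ t) :
    log (log (log (exp (exp (exp 1)) + t))) ≤ exp (exp 1) + δ * log t + llog (1 / δ) := by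
  set ee := exp (exp 1)
  set s := log t
  have hs : 0 ≤ s := log_nonneg ht
  have hee : 3 ≤ ee := by linarith [add_one_le_exp (exp 1), exp_one_gt_two]
  have h1 : Real.log (exp ee + t) ≤ ee + 1 + s := by
    have : exp ee + t ≤ exp ee * exp 1 * t := by
      have het : 0 ≤ exp 1 * t - 1 := by nlinarith [exp_one_gt_two]
      nlinarith [mul_le_mul_of_nonneg_right (one_le_exp (by linarith : (0:ℝ) ≤ ee)) het,
        exp_one_gt_two]
    calc Real.log (exp ee + t) ≤ Real.log (exp ee * exp 1 * t) :=
          log_le_log (by positivity) this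
      _ = ee + 1 + s := by
        rw [log_mul (by positivity) (by positivity), log_mul (by positivity) (by positivity),
          log_exp, log_exp]
  have h2 : ee + 1 + s ≤ (ee + δ * s) * (ee + 1 / δ) := by
    have : (ee + δ * s) * (ee + 1 / δ) = ee ^ 2 + ee / δ + δ * s * ee + s := by
      field_simp
      ring
    rw [this]
    nlinarith [div_nonneg (by positivity : 0 ≤ ee) hδ.le,
      mul_nonneg (mul_nonneg hδ.le hs) (by positivity : 0 ≤ ee)]
  set a := Real.log (ee + δ * s)
  set b := Real.log (ee + 1 / δ)
  have ha : 2 ≤ a := exp_one_gt_two.le.trans (le_log_exp_add _ (by positivity))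
  have hb : 2 ≤ b := exp_one_gt_two.le.trans (le_log_exp_add _ (by positivity))
  have h3 : Real.log (log (exp ee + t)) ≤ a + b := by
    calc Real.log (log (exp ee + t)) ≤ Real.log ((ee + δ * s) * (ee + 1 / δ)) :=
          log_le_log ((exp_pos _).trans_le (le_log_exp_add _ (by linarith))) (h1.trans h2)
      _ = a + b := log_mul (by positivity) (by positivity)
  have h4 : Real.log a ≤ ee + δ * s := by
    linarith [log_le_sub_one_of_pos (show 0 < a by linarith),
      log_le_sub_one_of_pos (show 0 < ee + δ * s by positivity)]
  calc Real.log (log (log (exp ee + t))) ≤ Real.log (a * b) :=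
        log_le_log ((exp_pos _).trans_le (le_log_log_exp_exp_add _ (by linarith)))
          (h3.trans (by nlinarith))
    _ = Real.log a + Real.log b := log_mul (by positivity) (by positivity)
    _ ≤ ee + δ * s + llog (1 / δ) := by unfold llog; linarith

lemma llog_le_log_log_log {δ t : ℝ} (hδ : 0 < δ) (ht : exp (1 / δ) ≤ t) :
    3 / 10 * llog (1 / δ) ≤ log (log (log (exp (exp (exp 1)) + t))) := by
  set ee := exp (exp 1)
  set M := ee + 1 / δ
  have ht0 : 0 < t := (exp_pos _).trans_le ht
  have h1 : M / 2 ≤ log (exp ee + t) := by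
    have hee : ee ≤ log (exp ee + t) := le_log_exp_add _ ht0.le
    have hδt : 1 / δ ≤ log (exp ee + t) := by
      rw [le_log_iff_exp_le (by positivity)]
      linarith [exp_pos ee]
    linarith
  have hlogM : exp 1 ≤ log M := le_log_exp_add _ (by positivity)
  have hlog2 : Real.log 2 < 7 / 10 := log_two_lt_d9.trans (by norm_num)
  have h2 : log M / 2 ≤ log (log (exp ee + t)) := by
    calc log M / 2 ≤ log M - Real.log 2 := by linarith [exp_one_gt_two]
      _ = Real.log (M / 2) := (log_div (by positivity) two_ne_zero).symm
      _ ≤ Real.log (log (exp ee + t)) := log_le_log (by positivity) h1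
  have hL : 1 ≤ llog (1 / δ) := one_le_llog (by positivity)
  calc 3 / 10 * llog (1 / δ) ≤ llog (1 / δ) - Real.log 2 := by linarith
    _ = Real.log (Real.log M / 2) := (log_div (by linarith [exp_one_gt_two]) two_ne_zero).symm
    _ ≤ log (log (log (exp ee + t))) :=
        log_le_log (by linarith [exp_one_gt_two]) h2

section LogMoments

variable {ε : ℝ}

open Nat in
lemma integral_Ioi_one_rpow_mul_log_pow (hε : 0 < ε) (k : ℕ) :
    ∫ t in Ioi (1 : ℝ), t ^ (-1 - ε) * Real.log t ^ k = k ! / ε ^ (k + 1) := by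
  have hsubst : ∫ t in Ioi (1 : ℝ), t ^ (-1 - ε) * Real.log t ^ k
      = ∫ u in Ioi (0 : ℝ), u ^ ((k + 1 : ℝ) - 1) * exp (-(ε * u)) := by
    rw [← Real.log_one, ← integral_comp_log_Ioi _ one_pos]
    refine setIntegral_congr_fun measurableSet_Ioi fun t ht => ?_
    have ht0 : 0 < t := one_pos.trans ht
    rw [smul_eq_mul, add_sub_cancel_right, Real.rpow_natCast,
      show -(ε * Real.log t) = Real.log t * -ε by ring, ← rpow_def_of_pos ht0,
      show -1 - ε = -1 + -ε by ring, rpow_add ht0, Real.rpow_neg_one]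
    ring
  rw [hsubst, integral_rpow_mul_exp_neg_mul_Ioi (by positivity) hε,
    Gamma_nat_eq_factorial, ← Nat.cast_add_one, Real.rpow_natCast, one_div_pow]
  ring

lemma integrableOn_Ioi_one_rpow_mul_log_pow (hε : 0 < ε) (k : ℕ) :
    IntegrableOn (fun t => t ^ (-1 - ε) * Real.log t ^ k) (Ioi 1) := by
  refine Integrable.of_integral_ne_zero ?_
  rw [integral_Ioi_one_rpow_mul_log_pow hε k]
  positivity

lemma integral_Ioi_one_rpow_mul_quadratic_log (hε : 0 < ε) (a b c : ℝ) :
    ∫ t in Ioi (1 : ℝ), t ^ (-1 - ε) * (a + b * Real.log t + c * Real.log t ^ 2)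
      = a / ε + b / ε ^ 2 + 2 * c / ε ^ 3 := by
  have hI := integrableOn_Ioi_one_rpow_mul_log_pow hε
  have hsplit : (fun t => t ^ (-1 - ε) * (a + b * Real.log t + c * Real.log t ^ 2))
      = fun t => a * (t ^ (-1 - ε) * Real.log t ^ 0) + b * (t ^ (-1 - ε) * Real.log t ^ 1)
        + c * (t ^ (-1 - ε) * Real.log t ^ 2) := by
    ext t; ring
  have h01 : IntegrableOn (fun t => a * (t ^ (-1 - ε) * Real.log t ^ 0)
      + b * (t ^ (-1 - ε) * Real.log t ^ 1)) (Ioi 1) :=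
    ((hI 0).const_mul a).add ((hI 1).const_mul b)
  rw [hsplit, integral_add h01 ((hI 2).const_mul c),
    integral_add ((hI 0).const_mul a) ((hI 1).const_mul b), integral_const_mul,
    integral_const_mul, integral_const_mul, integral_Ioi_one_rpow_mul_log_pow hε,
    integral_Ioi_one_rpow_mul_log_pow hε, integral_Ioi_one_rpow_mul_log_pow hε]
  norm_num
  ring

lemma integrableOn_Ioi_one_rpow_mul_quadratic_log (hε : 0 < ε) (a b c : ℝ) :
    IntegrableOn (fun t => t ^ (-1 - ε) * (a + b * Real.log t + c * Real.log t ^ 2)) (Ioi 1) := by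
  have hI := integrableOn_Ioi_one_rpow_mul_log_pow hε
  have h : IntegrableOn (fun t => a * (t ^ (-1 - ε) * Real.log t ^ 0)
      + b * (t ^ (-1 - ε) * Real.log t ^ 1) + c * (t ^ (-1 - ε) * Real.log t ^ 2)) (Ioi 1) :=
    (((hI 0).const_mul a).add ((hI 1).const_mul b)).add ((hI 2).const_mul c)
  exact h.congr_fun (fun t _ => by ring) measurableSet_Ioi

end LogMoments

lemma Φ_div_rpow_eq {t : ℝ} (ht : 0 < t) (q : ℝ) :
    Φ t / t ^ (q + 1) =
      t ^ (-q) * (log (exp 1 + t) * log (log (log (exp (exp (exp 1)) + t)))) := by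
  rw [Φ, rpow_add ht, Real.rpow_one, Real.rpow_neg ht.le]
  field_simp

lemma Φ_nonneg {t : ℝ} (ht : 0 ≤ t) : 0 ≤ Φ t := by
  have hA : 0 ≤ log (exp 1 + t) := zero_le_one.trans (le_log_exp_add 1 ht)
  have hB := one_le_log_log_log ht
  unfold Φ
  positivity

lemma Φ_div_rpow_nonneg {t : ℝ} (ht : 0 ≤ t) (q : ℝ) : 0 ≤ Φ t / t ^ q :=
  div_nonneg (Φ_nonneg ht) (rpow_nonneg ht q)

lemma measurable_Φ : Measurable Φ := by
  unfold Φ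
  fun_prop

section OrliczIntegral

variable {δ : ℝ}

lemma Φ_div_rpow_le_quadratic_log (hδ : 0 < δ) {t : ℝ} (ht : 1 < t) :
    Φ t / t ^ (1 + δ / 2 + 1) ≤ t ^ (-1 - δ / 2) *
      (2 * (exp (exp 1) + llog (1 / δ)) + (exp (exp 1) + llog (1 / δ) + 2 * δ) * Real.log t
        + δ * Real.log t ^ 2) := by
  have hB := log_log_log_le hδ ht.le
  have hB0 := one_le_log_log_log (zero_le_one.trans ht.le)
  have hA := log_exp_one_add_le ht.le
  have hlog := log_nonneg ht.le
  rw [Φ_div_rpow_eq (one_pos.trans ht), neg_add']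
  refine mul_le_mul_of_nonneg_left ?_ (by positivity)
  calc log (exp 1 + t) * log (log (log (exp (exp (exp 1)) + t)))
      ≤ (Real.log t + 2) * (exp (exp 1) + δ * Real.log t + llog (1 / δ)) :=
        mul_le_mul hA hB (by linarith) (by linarith)
    _ = _ := by ring

lemma integrableOn_Φ_div_rpow (hδ : 0 < δ) :
    IntegrableOn (fun t => Φ t / t ^ (1 + δ / 2 + 1)) (Ioi 1) := by
  refine (integrableOn_Ioi_one_rpow_mul_quadratic_log (half_pos hδ)
    (2 * (exp (exp 1) + llog (1 / δ))) (exp (exp 1) + llog (1 / δ) + 2 * δ) δ).mono'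
    ((measurable_Φ.div (by fun_prop)).aestronglyMeasurable) ?_
  filter_upwards [ae_restrict_mem measurableSet_Ioi] with t ht
  rw [Real.norm_eq_abs, abs_of_nonneg (Φ_div_rpow_nonneg (zero_le_one.trans ht.out.le) _)]
  exact Φ_div_rpow_le_quadratic_log hδ ht

lemma integral_Φ_div_rpow_le (hδ : 0 < δ) :
    ∫ t in Ioi (1 : ℝ), Φ t / t ^ (1 + δ / 2 + 1) ≤
      100 * llog (1 / δ) * (1 / δ * (1 / δ + 1)) := by
  set K := exp (exp 1) + llog (1 / δ) with hK_def
  have hK : K + 4 ≤ 21 * llog (1 / δ) := by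
    linarith [exp_exp_one_lt_sixteen, one_le_llog (one_div_pos.mpr hδ).le]
  have hK0 : 0 ≤ K := by linarith [exp_pos (exp 1), one_le_llog (one_div_pos.mpr hδ).le]
  calc ∫ t in Ioi (1 : ℝ), Φ t / t ^ (1 + δ / 2 + 1)
      ≤ ∫ t in Ioi (1 : ℝ), t ^ (-1 - δ / 2) *
          (2 * K + (K + 2 * δ) * Real.log t + δ * Real.log t ^ 2) :=
        integral_mono_of_nonneg
          (ae_restrict_of_forall_mem measurableSet_Ioi fun t ht =>
            Φ_div_rpow_nonneg (zero_le_one.trans ht.out.le) _)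
          (integrableOn_Ioi_one_rpow_mul_quadratic_log (half_pos hδ) _ _ _)
          (ae_restrict_of_forall_mem measurableSet_Ioi fun t ht =>
            Φ_div_rpow_le_quadratic_log hδ ht)
    _ = 4 * (K + 4) / δ ^ 2 + 4 * (K + 2) / δ := by
        rw [integral_Ioi_one_rpow_mul_quadratic_log (half_pos hδ)]
        field_simp
        ring
    _ ≤ 4 * (K + 4) / δ ^ 2 + 4 * (K + 4) / δ := by gcongr; linarith
    _ = 4 * (K + 4) * (1 / δ * (1 / δ + 1)) := by field_simp
    _ ≤ 100 * llog (1 / δ) * (1 / δ * (1 / δ + 1)) :=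
        mul_le_mul_of_nonneg_right (by linarith) (by positivity)

lemma half_le_exp_neg_half : 1 / 2 ≤ exp (-(1 / 2)) := by
  have hsq : exp (1 / 2) * exp (1 / 2) = exp 1 := by rw [← exp_add]; norm_num
  have h : exp (1 / 2) ≤ 2 := by nlinarith [exp_pos (1 / 2), exp_one_lt_three]
  rw [exp_neg, ← one_div]
  exact one_div_le_one_div_of_le (exp_pos _) h

lemma le_integral_Φ_div_rpow (hδ : 0 < δ) :
    3 / 10 * llog (1 / δ) / δ ^ 2 ≤ ∫ t in Ioi (1 : ℝ), Φ t / t ^ (1 + δ / 2 + 1) := by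
  set T := exp (1 / δ)
  have hT : 1 ≤ T := one_le_exp (by positivity)
  set c := 1 / δ * (3 / 10 * llog (1 / δ)) with hc_def
  have hc : 0 ≤ c := by have := one_le_llog (one_div_pos.mpr hδ).le; positivity
  have hpointwise : ∀ t ∈ Ioi T, c * t ^ (-1 - δ / 2) ≤ Φ t / t ^ (1 + δ / 2 + 1) := by
    intro t ht
    have ht0 : 0 < t := (exp_pos _).trans ht
    have hA : 1 / δ ≤ log (exp 1 + t) := by
      rw [le_log_iff_exp_le (by positivity)]
      linarith [exp_pos 1, ht.out]
    have hB := llog_le_log_log_log hδ ht.out.le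
    have hL := one_le_llog (one_div_pos.mpr hδ).le
    rw [Φ_div_rpow_eq ht0, neg_add', mul_comm c]
    exact mul_le_mul_of_nonneg_left
      (mul_le_mul hA hB (by linarith) ((one_div_pos.mpr hδ).le.trans hA)) (by positivity)
  have hwindow : ∫ t in Ioi T, c * t ^ (-1 - δ / 2) = c * (2 / δ * exp (-(1 / 2))) := by
    rw [integral_const_mul, integral_Ioi_rpow_of_lt (by linarith) (by positivity), ← exp_mul,
      show 1 / δ * (-1 - δ / 2 + 1) = -(1 / 2) by field_simp; ring,
      show -1 - δ / 2 + 1 = -(δ / 2) by ring, neg_div_neg_eq]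
    field_simp
  calc 3 / 10 * llog (1 / δ) / δ ^ 2 = c * (2 / δ * (1 / 2)) := by rw [hc_def]; field_simp
    _ ≤ c * (2 / δ * exp (-(1 / 2))) := by gcongr; exact half_le_exp_neg_half
    _ = ∫ t in Ioi T, c * t ^ (-1 - δ / 2) := hwindow.symm
    _ ≤ ∫ t in Ioi T, Φ t / t ^ (1 + δ / 2 + 1) :=
        setIntegral_mono_on
          ((integrableOn_Ioi_rpow_of_lt (by linarith) (by positivity)).const_mul c)
          ((integrableOn_Φ_div_rpow hδ).mono_set (Ioi_subset_Ioi hT)) measurableSet_Ioi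
          hpointwise
    _ ≤ ∫ t in Ioi (1 : ℝ), Φ t / t ^ (1 + δ / 2 + 1) :=
        setIntegral_mono_set (integrableOn_Φ_div_rpow hδ)
          (ae_restrict_of_forall_mem measurableSet_Ioi fun t ht =>
            Φ_div_rpow_nonneg (zero_le_one.trans ht.out.le) _)
          (Ioi_subset_Ioi hT).eventuallyLE

lemma two_rpow_neg_le_integral_Φ_div_rpow (hδ : 0 < δ) :
    (2 : ℝ) ^ (-(1 + δ / 2)) ≤ ∫ t in Ioi (1 : ℝ), Φ t / t ^ (1 + δ / 2 + 1) := by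
  have hpointwise :
      ∀ t ∈ Ioc (1 : ℝ) 2, (2 : ℝ) ^ (-(1 + δ / 2)) ≤ Φ t / t ^ (1 + δ / 2 + 1) := by
    intro t ht
    have ht0 : 0 < t := one_pos.trans ht.1
    have hA : 1 ≤ log (exp 1 + t) := le_log_exp_add 1 ht0.le
    have hB := one_le_log_log_log ht0.le
    rw [Φ_div_rpow_eq ht0]
    calc (2 : ℝ) ^ (-(1 + δ / 2)) ≤ t ^ (-(1 + δ / 2)) * 1 := by
          rw [mul_one]; exact rpow_le_rpow_of_nonpos ht0 ht.2 (by linarith)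
      _ ≤ _ := by gcongr; nlinarith
  calc (2 : ℝ) ^ (-(1 + δ / 2)) = ∫ t in Ioc (1 : ℝ) 2, (2 : ℝ) ^ (-(1 + δ / 2)) := by
        simp [Real.volume_real_Ioc]; norm_num
    _ ≤ ∫ t in Ioc (1 : ℝ) 2, Φ t / t ^ (1 + δ / 2 + 1) :=
        setIntegral_mono_on (integrableOn_const measure_Ioc_lt_top.ne)
          ((integrableOn_Φ_div_rpow hδ).mono_set Ioc_subset_Ioi_self) measurableSet_Ioc
          hpointwise
    _ ≤ ∫ t in Ioi (1 : ℝ), Φ t / t ^ (1 + δ / 2 + 1) :=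
        setIntegral_mono_set (integrableOn_Φ_div_rpow hδ)
          (ae_restrict_of_forall_mem measurableSet_Ioi fun t ht =>
            Φ_div_rpow_nonneg (zero_le_one.trans ht.out.le) _)
          Ioc_subset_Ioi_self.eventuallyLE

end OrliczIntegral

section RpowBounds

lemma rpow_one_div_le_max {J q : ℝ} (hJ : 0 ≤ J) (hq : 1 ≤ q) : J ^ (1 / q) ≤ max 1 J := by
  have hq0 : 0 ≤ 1 / q := by positivity
  rcases le_total J 1 with hJ1 | hJ1
  · exact (rpow_le_one hJ hJ1 hq0).trans (le_max_left _ _)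
  · calc J ^ (1 / q) ≤ J ^ (1 : ℝ) :=
          rpow_le_rpow_of_exponent_le hJ1 ((div_le_one (by linarith)).mpr hq)
      _ ≤ max 1 J := by rw [Real.rpow_one]; exact le_max_right _ _

lemma div_le_rpow_one_div {m J q K : ℝ} (hm : 0 < m) (hmJ : m ≤ J) (hq : 1 ≤ q) (hK : 1 ≤ K)
    (hmK : m ^ (q - 1) ≤ K) : m / K ≤ J ^ (1 / q) := by
  have hq0 : 0 < q := by linarith
  refine le_trans ?_ (rpow_le_rpow hm.le hmJ (by positivity))
  rcases le_total m 1 with hm1 | hm1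
  · calc m / K ≤ m := div_le_self hm.le hK
      _ = m ^ (1 : ℝ) := (Real.rpow_one m).symm
      _ ≤ m ^ (1 / q) := rpow_le_rpow_of_exponent_ge hm hm1 ((div_le_one hq0).mpr hq)
  · have hexp : 1 - (q - 1) ≤ 1 / q := by
      rw [le_div_iff₀ hq0]
      nlinarith
    calc m / K ≤ m / m ^ (q - 1) := div_le_div_of_nonneg_left hm.le (by positivity) hmK
      _ = m ^ (1 - (q - 1)) := by rw [rpow_sub hm 1 (q - 1), Real.rpow_one]
      _ ≤ m ^ (1 / q) := rpow_le_rpow_of_exponent_le hm1 hexp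

lemma rpow_half_le_exp_four {m δ : ℝ} (hδ : 0 < δ) (hδ1 : δ ≤ 1) (hm : 0 < m)
    (hm5 : m ≤ 5 / δ ^ 3) : m ^ (δ / 2) ≤ exp 4 := by
  have hlog5 : Real.log 5 ≤ 4 := by linarith [log_le_sub_one_of_pos (by norm_num : (0 : ℝ) < 5)]
  have hlogδ : -Real.log δ ≤ 1 / δ := by
    rw [← Real.log_inv, ← one_div]
    exact log_le_self (by positivity)
  have hlogm : Real.log m ≤ 4 + 3 / δ := by
    calc Real.log m ≤ Real.log (5 / δ ^ 3) := log_le_log hm hm5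
      _ = Real.log 5 - 3 * Real.log δ := by
        rw [log_div (by norm_num) (by positivity), Real.log_pow]; push_cast; ring
      _ ≤ 4 + 3 / δ := by rw [div_eq_mul_one_div 3]; linarith
  rw [rpow_def_of_pos hm, exp_le_exp]
  calc Real.log m * (δ / 2) ≤ (4 + 3 / δ) * (δ / 2) := by gcongr
    _ = 2 * δ + 3 / 2 := by field_simp; ring
    _ ≤ 4 := by linarith

end RpowBounds

section BpConstant

variable {δ : ℝ}

lemma BpConstR_Φ_le (hδ : 0 < δ) :
    BpConstR Φ (1 + δ / 2) ≤ 100 * ((1 / δ + 1) ^ 2 * llog (1 / δ)) := by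
  have hL := one_le_llog (one_div_pos.mpr hδ).le
  have hx : 0 < 1 / δ := one_div_pos.mpr hδ
  have hJ0 : 0 ≤ ∫ t in Ioi (1 : ℝ), Φ t / t ^ (1 + δ / 2 + 1) :=
    setIntegral_nonneg measurableSet_Ioi fun t ht =>
      Φ_div_rpow_nonneg (zero_le_one.trans ht.out.le) _
  refine (rpow_one_div_le_max hJ0 (by linarith)).trans (max_le ?_ ?_)
  · nlinarith [mul_le_mul hL (show (1 : ℝ) ≤ (1 / δ + 1) ^ 2 by nlinarith) zero_le_one
      (by positivity)]
  · refine (integral_Φ_div_rpow_le hδ).trans ?_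
    nlinarith [mul_le_mul_of_nonneg_left
      (show 1 / δ * (1 / δ + 1) ≤ (1 / δ + 1) ^ 2 by nlinarith)
      (by positivity : (0 : ℝ) ≤ 100 * llog (1 / δ))]

lemma half_le_BpConstR_Φ (hδ : 0 < δ) : 1 / 2 ≤ BpConstR Φ (1 + δ / 2) := by
  have h := rpow_le_rpow (by positivity) (two_rpow_neg_le_integral_Φ_div_rpow hδ)
    (by positivity : (0 : ℝ) ≤ 1 / (1 + δ / 2))
  rwa [← rpow_mul zero_le_two, neg_mul, mul_one_div_cancel (by positivity), Real.rpow_neg_one,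
    ← one_div] at h

lemma le_BpConstR_Φ_of_le_one (hδ : 0 < δ) (hδ1 : δ ≤ 1) :
    exp (-4) / 64 * ((1 / δ + 1) ^ 2 * llog (1 / δ)) ≤ BpConstR Φ (1 + δ / 2) := by
  have hx : 1 ≤ 1 / δ := (le_div_iff₀ hδ).mpr (by linarith)
  have hL := one_le_llog (one_div_pos.mpr hδ).le
  set m := 3 / 10 * llog (1 / δ) / δ ^ 2 with hm_def
  have hm : 0 < m := by positivity
  have hm5 : m ≤ 5 / δ ^ 3 := by
    have hLδ : llog (1 / δ) * δ ≤ 16 := by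
      have := mul_le_mul_of_nonneg_right (llog_le (one_div_pos.mpr hδ).le) hδ.le
      rw [add_mul, one_div_mul_cancel hδ.ne'] at this
      linarith
    rw [hm_def, div_le_div_iff₀ (by positivity) (by positivity)]
    nlinarith [pow_pos hδ 2]
  refine le_trans ?_ (div_le_rpow_one_div hm (le_integral_Φ_div_rpow hδ) (q := 1 + δ / 2)
    (K := exp 4) (by linarith) (one_le_exp (by norm_num))
    (by rw [add_sub_cancel_left]; exact rpow_half_le_exp_four hδ hδ1 hm hm5))
  have hsq : (1 / δ + 1) ^ 2 ≤ 4 * (1 / δ) ^ 2 := by nlinarith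
  calc exp (-4) / 64 * ((1 / δ + 1) ^ 2 * llog (1 / δ))
      ≤ exp (-4) / 64 * (4 * (1 / δ) ^ 2 * llog (1 / δ)) := by gcongr
    _ ≤ exp (-4) * (3 / 10 * llog (1 / δ) * (1 / δ) ^ 2) := by
      nlinarith [mul_pos (exp_pos (-4)) (mul_pos (pow_pos (one_div_pos.mpr hδ) 2)
        (zero_lt_one.trans_le hL))]
    _ = m / exp 4 := by rw [hm_def, exp_neg]; field_simp

lemma le_BpConstR_Φ (hδ : 0 < δ) :
    exp (-4) / 64 * ((1 / δ + 1) ^ 2 * llog (1 / δ)) ≤ BpConstR Φ (1 + δ / 2) := by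
  rcases le_or_gt δ 1 with hδ1 | hδ1
  · exact le_BpConstR_Φ_of_le_one hδ hδ1
  have hx : 0 < 1 / δ := one_div_pos.mpr hδ
  have hx1 : 1 / δ ≤ 1 := (div_le_one hδ).mpr hδ1.le
  have hL := llog_le hx.le
  have h64 : (1 / δ + 1) ^ 2 * llog (1 / δ) ≤ 64 := by
    have hsq : (1 / δ + 1) ^ 2 ≤ 4 := by nlinarith
    nlinarith [one_le_llog hx.le]
  have he4 : exp (-4) ≤ 1 / 2 := by
    rw [exp_neg, ← one_div]
    exact one_div_le_one_div_of_le two_pos (by linarith [add_one_le_exp (4 : ℝ)])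
  refine le_trans ?_ (half_le_BpConstR_Φ hδ)
  nlinarith [exp_pos (-4)]

end BpConstant

/-- For `Φ(t) = t log(e+t) logloglog(e^{e^e}+t)`,
`C_Φ((p+1)/2) ≃ (p/(p-1))² loglog(e^e + 1/(p-1))` uniformly in `p ∈ (1,∞)`. -/
theorem stmt1 : ∃ c₁ c₂ : ℝ, 0 < c₁ ∧ 0 < c₂ ∧ ∀ p : ℝ, 1 < p →
    c₁ * ((p / (p - 1)) ^ 2 * Real.log (Real.log (Real.exp (Real.exp 1) + 1 / (p - 1)))) ≤
      BpConstR (fun t => t * Real.log (Real.exp 1 + t) *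
        Real.log (Real.log (Real.log (Real.exp (Real.exp (Real.exp 1)) + t)))) ((p + 1) / 2) ∧
    BpConstR (fun t => t * Real.log (Real.exp 1 + t) *
        Real.log (Real.log (Real.log (Real.exp (Real.exp (Real.exp 1)) + t)))) ((p + 1) / 2) ≤
      c₂ * ((p / (p - 1)) ^ 2 * Real.log (Real.log (Real.exp (Real.exp 1) + 1 / (p - 1)))) := by
  refine ⟨exp (-4) / 64, 100, by positivity, by norm_num, fun p hp => ?_⟩
  have hδ : 0 < p - 1 := by linarith
  rw [show (p + 1) / 2 = 1 + (p - 1) / 2 by ring,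
    show p / (p - 1) = 1 / (p - 1) + 1 by field_simp; ring]
  exact ⟨le_BpConstR_Φ hδ, BpConstR_Φ_le hδ⟩
end
end

section
/- (Local mean oscillation decomposition) Let f be a measurable function on ℝⁿ and Q₀ a fixed cube. Then there exists a (possibly empty) sparse family S of cubes from the dyadic lattice D(Q₀) generated by Q₀ such that for almost every x ∈ Q₀: |f(x) − m_f(Q₀)| ≤ 2 Σ_{Q∈S} ω_{1/2^{n+2}}(f;Q)·χ_Q(x). -/
open MeasureTheory ENNReal Set
noncomputable section

/-!
A stopping-time argument. Let `λ = 2^{-(n+2)}`. On a cube `Q` with median `m_Q`, comparing `m_Q`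
with a near-optimal constant in the definition of `ω_λ(f;Q)` shows that the exceptional set
`Ω_Q = {x ∈ Q : |f x - m_Q| > 2 ω_λ(f;Q)}` has measure at most `λ|Q|`. The maximal dyadic
subcubes of `Q` in which `Ω_Q` has density more than `2^{-(n+1)}` cover `Ω_Q` almost everywhere
(Lebesgue differentiation) and have total measure at most `|Q|/2`; since their parents have small
density, each of them is at most half filled by `Ω_Q`, so `f` has a median on it within
`2 ω_λ(f;Q)` of `m_Q`. Iterating from `Q₀` gives generations of cubes whose unions shrink
geometrically. Almost every `x` therefore lies in finitely many of them, and telescoping the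
medians along that chain bounds `|f x - m|` by `2 Σ ω_λ(f;Q) χ_Q(x)`. Every cube keeps half of
its measure outside its children, which gives the sparse sets `E(Q)`.
-/

open Filter Topology

namespace MeanOscillation

variable {n : ℕ}

lemma cube_eq_pi (c : Rn n) (r : ℝ) :
    cube n c r = univ.pi fun i => Icc (c i - r) (c i + r) := by
  ext y
  simp only [cube, mem_ofPred_eq, Set.mem_pi, mem_univ, forall_const, mem_Icc, abs_le]
  exact forall_congr' fun i => by constructor <;> intro h <;> constructor <;> linarith [h.1, h.2]

lemma measurableSet_cube (c : Rn n) (r : ℝ) : MeasurableSet (cube n c r) := by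
  rw [cube_eq_pi]
  exact MeasurableSet.univ_pi fun _ => measurableSet_Icc

lemma volume_cube (c : Rn n) (r : ℝ) : volume (cube n c r) = ENNReal.ofReal (2 * r) ^ n := by
  rw [cube_eq_pi, volume_pi_pi]
  simp [Real.volume_Icc, two_mul]

lemma volume_cube_ne_top (c : Rn n) (r : ℝ) : volume (cube n c r) ≠ ∞ := by
  rw [volume_cube]
  exact pow_ne_top ofReal_ne_top

lemma volume_cube_pos (c : Rn n) {r : ℝ} (hr : 0 < r) : 0 < volume (cube n c r) := by
  rw [volume_cube]
  exact ENNReal.pow_pos (ofReal_pos.2 (by linarith)) n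

lemma closedBall_eq_cube (c : Rn n) {r : ℝ} (hr : 0 ≤ r) : Metric.closedBall c r = cube n c r := by
  ext y
  simp [cube, dist_pi_le_iff hr, Real.dist_eq]

section Distribution

variable {α : Type*} [MeasurableSpace α] {μ : Measure α} {Q : Set α} {g : α → ℝ}

lemma measure_sep_mono {p q : α → Prop} (h : ∀ x ∈ Q, p x → q x) :
    μ {x ∈ Q | p x} ≤ μ {x ∈ Q | q x} :=
  measure_mono fun x hx => ⟨hx.1, h x hx.1 hx.2⟩

lemma measure_setOf_lt_le_of_forall_lt {s : ℝ} {t : ℝ≥0∞}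
    (h : ∀ s', s < s' → μ {x ∈ Q | s' < g x} ≤ t) : μ {x ∈ Q | s < g x} ≤ t := by
  obtain ⟨u, hu_anti, hu_gt, hu_lim⟩ := exists_seq_strictAnti_tendsto s
  have hunion : {x ∈ Q | s < g x} = ⋃ k, {x ∈ Q | u k < g x} := by
    ext x
    simp only [mem_ofPred_eq, mem_iUnion]
    refine ⟨fun ⟨hxQ, hx⟩ => ?_, fun ⟨k, hxQ, hx⟩ => ⟨hxQ, (hu_gt k).trans hx⟩⟩
    obtain ⟨k, hk⟩ := (hu_lim.eventually (gt_mem_nhds hx)).exists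
    exact ⟨k, hxQ, hk⟩
  have hmono : Monotone fun k => {x ∈ Q | u k < g x} := fun i j hij x hx =>
    ⟨hx.1, (hu_anti.antitone hij).trans_lt hx.2⟩
  rw [hunion, hmono.measure_iUnion]
  exact iSup_le fun k => h _ (hu_gt k)

lemma exists_measure_setOf_lt_lt (hQ : MeasurableSet Q) (hμQ : μ Q ≠ ∞) (hg : Measurable g)
    {t : ℝ≥0∞} (ht : 0 < t) : ∃ s : ℝ, μ {x ∈ Q | s < g x} < t := by
  have hanti : Antitone fun k : ℕ => {x ∈ Q | (k : ℝ) < g x} := fun i j hij x hx =>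
    ⟨hx.1, (Nat.cast_le.2 hij).trans_lt hx.2⟩
  have hempty : ⋂ k : ℕ, {x ∈ Q | (k : ℝ) < g x} = ∅ := by
    refine eq_empty_of_forall_notMem fun x hx => ?_
    obtain ⟨k, hk⟩ := exists_nat_ge (g x)
    exact (mem_iInter.1 hx k).2.not_ge hk
  have hlim := tendsto_measure_iInter_atTop (μ := μ) (s := fun k : ℕ => {x ∈ Q | (k : ℝ) < g x})
    (fun k => (hQ.inter (measurableSet_lt measurable_const hg)).nullMeasurableSet) hanti
    ⟨0, ne_top_of_le_ne_top hμQ (measure_mono fun x hx => hx.1)⟩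
  rw [hempty, measure_empty] at hlim
  obtain ⟨k, hk⟩ := (hlim.eventually (gt_mem_nhds ht)).exists
  exact ⟨k, hk⟩

lemma half_le_measure_of_subset_union {A B : Set α} (hQ : μ Q ≠ ∞) (hcover : Q ⊆ A ∪ B)
    (hB : μ B ≤ μ Q / 2) : μ Q / 2 ≤ μ A := by
  by_contra! hA
  have := ((measure_mono hcover).trans (measure_union_le A B)).trans_lt
    (ENNReal.add_lt_add_of_lt_of_le (ne_top_of_le_ne_top (ENNReal.div_ne_top hQ two_ne_zero) hB)
      hA hB)
  exact this.ne (ENNReal.add_halves _).symm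

lemma measure_le_half_of_disjoint {A B : Set α} (hB : MeasurableSet B) (hAB : Disjoint A B)
    (hAQ : A ⊆ Q) (hBQ : B ⊆ Q) (hA : μ Q / 2 < μ A) : μ B ≤ μ Q / 2 := by
  by_contra! hB'
  refine ((ENNReal.add_halves _).symm.trans_lt (ENNReal.add_lt_add hA hB')).not_ge ?_
  rw [← measure_union hAB hB]
  exact measure_mono (union_subset hAQ hBQ)

end Distribution

lemma rearr_nonneg (g : Rn n → ℝ) (Q : Set (Rn n)) (t : ℝ≥0∞) : 0 ≤ rearr g Q t :=
  Real.sInf_nonneg fun _ hs => hs.1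

lemma osc_nonneg (lam : ℝ) (f : Rn n → ℝ) (Q : Set (Rn n)) : 0 ≤ osc lam f Q :=
  Real.iInf_nonneg fun _ => rearr_nonneg _ _ _

variable {f g : Rn n → ℝ} {Q : Set (Rn n)} {t : ℝ≥0∞} {m : ℝ}

lemma rearr_le {s : ℝ} (hs : 0 ≤ s) (h : volume {x ∈ Q | s < |g x|} ≤ t) : rearr g Q t ≤ s :=
  csInf_le ⟨0, fun _ hs => hs.1⟩ ⟨hs, h⟩

lemma volume_rearr_lt_le (hg : Measurable g) (hQ : MeasurableSet Q) (hQfin : volume Q ≠ ∞)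
    (ht : 0 < t) : volume {x ∈ Q | rearr g Q t < |g x|} ≤ t := by
  have hne : {s : ℝ | 0 ≤ s ∧ volume {x ∈ Q | s < |g x|} ≤ t}.Nonempty := by
    obtain ⟨s, hs⟩ := exists_measure_setOf_lt_lt hQ hQfin hg.abs ht
    exact ⟨max s 0, le_max_right _ _,
      le_trans (measure_sep_mono fun x _ hx => (le_max_left _ _).trans_lt hx) hs.le⟩
  refine measure_setOf_lt_le_of_forall_lt fun s' hs' => ?_
  obtain ⟨s, hs, hss'⟩ := (csInf_lt_iff ⟨0, fun _ h => h.1⟩ hne).1 hs'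
  exact le_trans (measure_sep_mono fun x _ hx => hss'.trans hx) hs.2

end MeanOscillation

section Median

open MeanOscillation

variable {n : ℕ} {f : Rn n → ℝ} {Q : Set (Rn n)} {t : ℝ≥0∞} {m : ℝ}

lemma IsMedian.neg (hm : IsMedian f Q m) : IsMedian (-f) Q (-m) := by
  simp only [IsMedian, Pi.neg_apply, neg_lt_neg_iff]
  exact ⟨hm.2, hm.1⟩

lemma IsMedian.sub_le_of_volume_lt (hm : IsMedian f Q m) (hQ : volume Q ≠ ∞) {c s : ℝ}
    (h : volume {x ∈ Q | s < |f x - c|} < volume Q / 2) : m - c ≤ s := by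
  by_contra! hlt
  refine (half_le_measure_of_subset_union hQ (fun x hx => ?_) hm.2).not_gt h
  by_cases hx' : s < |f x - c|
  · exact Or.inl ⟨hx, hx'⟩
  · exact Or.inr ⟨hx, by linarith [le_abs_self (f x - c), not_lt.1 hx']⟩

lemma IsMedian.abs_sub_le_of_volume_lt (hm : IsMedian f Q m) (hQ : volume Q ≠ ∞) {c s : ℝ}
    (h : volume {x ∈ Q | s < |f x - c|} < volume Q / 2) : |m - c| ≤ s := by
  have hneg := hm.neg.sub_le_of_volume_lt hQ (c := -c) (s := s) (by
    simpa only [Pi.neg_apply, neg_sub_neg, abs_sub_comm] using h)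
  exact abs_le.2 ⟨by linarith, hm.sub_le_of_volume_lt hQ h⟩

lemma IsMedian.rearr_le_two_mul (hm : IsMedian f Q m) (hf : Measurable f) (hQ : MeasurableSet Q)
    (hQfin : volume Q ≠ ∞) (ht : 0 < t) (htQ : t < volume Q / 2) (c : ℝ) :
    rearr (fun x => f x - m) Q t ≤ 2 * rearr (fun x => f x - c) Q t := by
  set s := rearr (fun x => f x - c) Q t
  have hs := volume_rearr_lt_le (hf.sub_const c) hQ hQfin ht
  have hmc : |m - c| ≤ s := hm.abs_sub_le_of_volume_lt hQfin (hs.trans_lt htQ)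
  have hle : rearr (fun x => f x - m) Q t ≤ s + |m - c| := by
    refine rearr_le (add_nonneg (rearr_nonneg _ _ _) (abs_nonneg _))
      (le_trans (measure_sep_mono fun x _ hx => ?_) hs)
    have := abs_sub_le (f x) c m
    rw [abs_sub_comm c m] at this
    linarith
  linarith

lemma IsMedian.volume_two_osc_lt_abs_sub_le (hm : IsMedian f Q m) (hf : Measurable f)
    (hQ : MeasurableSet Q) (hQfin : volume Q ≠ ∞) (hQpos : 0 < volume Q) {lam : ℝ}
    (hlam0 : 0 < lam) (hlam : lam < 1 / 2) :
    volume {x ∈ Q | 2 * osc lam f Q < |f x - m|} ≤ ENNReal.ofReal lam * volume Q := by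
  have ht : 0 < ENNReal.ofReal lam * volume Q :=
    ENNReal.mul_pos (ofReal_pos.2 hlam0).ne' hQpos.ne'
  have htQ : ENNReal.ofReal lam * volume Q < volume Q / 2 := by
    rw [ENNReal.div_eq_inv_mul]
    refine ENNReal.mul_lt_mul_left hQpos.ne' hQfin ?_
    rw [← ofReal_ofNat 2, ← ofReal_inv_of_pos two_pos]
    exact (ofReal_lt_ofReal_iff (by norm_num)).2 (by linarith)
  have hosc : rearr (fun x => f x - m) Q (ENNReal.ofReal lam * volume Q) ≤ 2 * osc lam f Q := by
    have : rearr (fun x => f x - m) Q (ENNReal.ofReal lam * volume Q) / 2 ≤ osc lam f Q :=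
      le_ciInf fun c => by linarith [hm.rearr_le_two_mul hf hQ hQfin ht htQ c]
    linarith
  exact le_trans (measure_sep_mono fun x _ hx => hosc.trans_lt hx)
    (volume_rearr_lt_le (hf.sub_const m) hQ hQfin ht)

lemma exists_isMedian (hf : Measurable f) (hQ : MeasurableSet Q) (hQfin : volume Q ≠ ∞)
    (hQpos : 0 < volume Q) : ∃ m, IsMedian f Q m := by
  set T := {m : ℝ | volume {x ∈ Q | m < f x} ≤ volume Q / 2}
  have hhalf : 0 < volume Q / 2 := ENNReal.half_pos hQpos.ne'
  have hT : T.Nonempty :=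
    let ⟨s, hs⟩ := exists_measure_setOf_lt_lt hQ hQfin hf hhalf
    ⟨s, hs.le⟩
  obtain ⟨s, hs⟩ := exists_measure_setOf_lt_lt hQ hQfin hf.neg hhalf
  have hbdd : BddBelow T := ⟨-s, fun m hm => by
    by_contra! hlt
    refine (half_le_measure_of_subset_union hQfin (fun x hx => ?_) hm).not_gt hs
    rcases lt_or_ge m (f x) with h | h
    · exact Or.inr ⟨hx, h⟩
    · exact Or.inl ⟨hx, show s < -f x by linarith⟩⟩
  refine ⟨sInf T, measure_setOf_lt_le_of_forall_lt fun s' hs' => ?_, ?_⟩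
  · obtain ⟨m, hmT, hms'⟩ := (csInf_lt_iff hbdd hT).1 hs'
    exact le_trans (measure_sep_mono fun x _ hx => hms'.trans hx) hmT
  · have hneg : volume {x ∈ Q | -sInf T < -f x} ≤ volume Q / 2 := by
      refine measure_setOf_lt_le_of_forall_lt fun s' hs' => ?_
      have hs'T : -s' ∉ T := fun h => (csInf_le hbdd h).not_gt (by linarith)
      exact measure_le_half_of_disjoint (hQ.inter (measurableSet_lt measurable_const hf.neg))
        (disjoint_left.2 fun x h1 h2 => by linarith [h1.2, h2.2]) (sep_subset _ _)
        (sep_subset _ _) (not_le.1 hs'T)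
    simpa only [neg_lt_neg_iff] using hneg

lemma IsMedian.exists_isMedian_abs_sub_le (hm : IsMedian f Q m) {c β : ℝ}
    (h : volume {x ∈ Q | β < |f x - c|} ≤ volume Q / 2) (hβ : 0 ≤ β) :
    ∃ m', IsMedian f Q m' ∧ |m' - c| ≤ β := by
  refine ⟨max (c - β) (min m (c + β)), ⟨?_, ?_⟩, abs_le.2 ⟨?_, ?_⟩⟩
  · refine le_trans (measure_sep_mono fun x _ hx => (le_max_right _ _).trans_lt hx) ?_
    rcases min_choice m (c + β) with h' | h' <;> rw [h']
    · exact hm.1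
    · exact le_trans (measure_sep_mono fun x _ hx =>
        (show β < f x - c by linarith).trans_le (le_abs_self _)) h
  · refine le_trans (measure_sep_mono fun x _ hx =>
      hx.trans_le (max_le_max le_rfl (min_le_left m (c + β)))) ?_
    rcases max_choice (c - β) m with h' | h' <;> rw [h']
    · exact le_trans (measure_sep_mono fun x _ hx =>
        (show β < c - f x by linarith).trans_le (abs_sub_comm c (f x) ▸ le_abs_self _)) h
    · exact hm.2
  · linarith [le_max_left (c - β) (min m (c + β))]
  · linarith [max_le (show c - β ≤ c + β by linarith) (min_le_right m (c + β))]

end Median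

namespace MeanOscillation

def dyadicIcc (a ℓ : ℝ) (k j : ℕ) : Set ℝ :=
  Icc (a + j * (ℓ / 2 ^ k)) (a + (j + 1) * (ℓ / 2 ^ k))

section DyadicIcc

variable {a ℓ : ℝ} {k k' : ℕ}

lemma div_two_pow_eq_mul (ℓ : ℝ) (h : k ≤ k') : ℓ / 2 ^ k = 2 ^ (k' - k) * (ℓ / 2 ^ k') := by
  rw [show (2 : ℝ) ^ k' = 2 ^ (k' - k) * 2 ^ k by rw [← pow_add, Nat.sub_add_cancel h]]
  field_simp

lemma dyadicIcc_subset (hℓ : 0 ≤ ℓ) (h : k ≤ k') (j : ℕ) :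
    dyadicIcc a ℓ k' j ⊆ dyadicIcc a ℓ k (j / 2 ^ (k' - k)) := by
  have hs : 0 ≤ ℓ / 2 ^ k' := by positivity
  have h1 : ((j / 2 ^ (k' - k) : ℕ) : ℝ) * 2 ^ (k' - k) ≤ j := by
    exact_mod_cast Nat.div_mul_le_self j _
  have h2 : (j : ℝ) + 1 ≤ ((j / 2 ^ (k' - k) : ℕ) + 1) * 2 ^ (k' - k) := by
    have := Nat.lt_mul_div_succ j (pow_pos two_pos (k' - k))
    rw [mul_comm] at this
    exact_mod_cast this
  intro x hx
  rw [dyadicIcc, div_two_pow_eq_mul ℓ h]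
  constructor <;> nlinarith [hx.1, hx.2, mul_le_mul_of_nonneg_right h1 hs,
    mul_le_mul_of_nonneg_right h2 hs]

lemma volume_dyadicIcc_inter (hℓ : 0 ≤ ℓ) (h : k ≤ k') {i j : ℕ} (hij : j / 2 ^ (k' - k) ≠ i) :
    volume (dyadicIcc a ℓ k' j ∩ dyadicIcc a ℓ k i) = 0 := by
  have hs : 0 ≤ ℓ / 2 ^ k' := by positivity
  simp only [dyadicIcc, div_two_pow_eq_mul ℓ h]
  rcases lt_or_ge j (i * 2 ^ (k' - k)) with hlt | hge
  · have h1 : (j : ℝ) + 1 ≤ i * 2 ^ (k' - k) := by exact_mod_cast hlt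
    refine measure_mono_null (fun x hx => ?_) (measure_singleton (a + (j + 1) * (ℓ / 2 ^ k')))
    exact le_antisymm hx.1.2 (by nlinarith [hx.2.1, mul_le_mul_of_nonneg_right h1 hs])
  · have h1 : ((i : ℝ) + 1) * 2 ^ (k' - k) ≤ j := by
      by_contra! hlt
      exact hij (Nat.div_eq_of_lt_le hge (by exact_mod_cast hlt))
    refine measure_mono_null (fun x hx => ?_) (measure_singleton (a + j * (ℓ / 2 ^ k')))
    exact le_antisymm (by nlinarith [hx.2.2, mul_le_mul_of_nonneg_right h1 hs]) hx.1.1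

lemma exists_mem_dyadicIcc (hℓ : 0 < ℓ) (h : k ≤ k') {i : ℕ} {x : ℝ}
    (hx : x ∈ dyadicIcc a ℓ k i) : ∃ j, j / 2 ^ (k' - k) = i ∧ x ∈ dyadicIcc a ℓ k' j := by
  rw [dyadicIcc, div_two_pow_eq_mul ℓ h] at hx
  set s := ℓ / 2 ^ k'
  set M := 2 ^ (k' - k)
  have hs : 0 < s := by positivity
  have hM : 1 ≤ M := Nat.one_le_two_pow
  have hMi : (i + 1) * M = i * M + M := by ring
  have hxa : 0 ≤ x - a := by nlinarith [hx.1, (by positivity : 0 ≤ (i : ℝ) * (2 ^ (k' - k) * s))]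
  have hlow : i * M ≤ ⌊(x - a) / s⌋₊ :=
    Nat.le_floor (by rw [le_div_iff₀ hs]; push_cast [M]; nlinarith [hx.1])
  have hfloor : (⌊(x - a) / s⌋₊ : ℝ) * s ≤ x - a :=
    (le_div_iff₀ hs).1 (Nat.floor_le (div_nonneg hxa hs.le))
  refine ⟨min ⌊(x - a) / s⌋₊ ((i + 1) * M - 1), Nat.div_eq_of_lt_le (le_min hlow (by omega))
    (by omega), ?_, ?_⟩
  · have : ((min ⌊(x - a) / s⌋₊ ((i + 1) * M - 1) : ℕ) : ℝ) ≤ ⌊(x - a) / s⌋₊ :=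
      Nat.cast_le.2 (min_le_left _ _)
    nlinarith
  · rcases min_choice ⌊(x - a) / s⌋₊ ((i + 1) * M - 1) with hmin | hmin <;> rw [hmin]
    · have := Nat.lt_floor_add_one ((x - a) / s)
      rw [div_lt_iff₀ hs] at this
      linarith
    · have : (((i + 1) * M - 1 : ℕ) : ℝ) + 1 = (i + 1) * 2 ^ (k' - k) := by
        rw [Nat.cast_sub (by omega)]
        push_cast [M]
        ring
      rw [this]
      nlinarith [hx.2]

end DyadicIcc

abbrev DyadicIndex (n : ℕ) := ℕ × (Fin n → ℕ)

variable {n : ℕ} {c₀ : Rn n} {r₀ : ℝ}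

def dyadicCube (c₀ : Rn n) (r₀ : ℝ) (p : DyadicIndex n) : Set (Rn n) :=
  cube n (fun i => c₀ i - r₀ + (2 * (p.2 i : ℝ) + 1) * (r₀ / 2 ^ p.1)) (r₀ / 2 ^ p.1)

def IsDyadicIndex (p : DyadicIndex n) : Prop := ∀ i, p.2 i < 2 ^ p.1

/-- For `k ≤ q.1`, the index of the generation-`k` cube containing the cube of `q`. -/
def ancestor (q : DyadicIndex n) (k : ℕ) : DyadicIndex n := (k, fun i => q.2 i / 2 ^ (q.1 - k))

lemma ancestor_self (q : DyadicIndex n) : ancestor q q.1 = q := by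
  simp [ancestor]

lemma ancestor_ancestor {q : DyadicIndex n} {k k' : ℕ} (h : k ≤ k') (h' : k' ≤ q.1) :
    ancestor (ancestor q k') k = ancestor q k := by
  simp only [ancestor, Nat.div_div_eq_div_mul, ← pow_add, Prod.mk.injEq, true_and]
  funext i
  congr 2
  omega

lemma IsDyadicIndex.of_ancestor {q : DyadicIndex n} {k : ℕ} (h : k ≤ q.1)
    (hq : IsDyadicIndex (ancestor q k)) : IsDyadicIndex q := fun i => by
  have := (Nat.div_lt_iff_lt_mul (pow_pos two_pos _)).1 (hq i)
  simp only [ancestor] at this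
  rwa [← pow_add, Nat.add_sub_cancel' h] at this

lemma isDyadicIndex_zero : IsDyadicIndex (0 : DyadicIndex n) := fun _ => by simp

lemma dyadicCube_zero : dyadicCube c₀ r₀ 0 = cube n c₀ r₀ := by
  simp [dyadicCube]

lemma mem_dyadicSub {p : DyadicIndex n} (hp : IsDyadicIndex p) :
    dyadicCube c₀ r₀ p ∈ dyadicSub n c₀ r₀ :=
  ⟨p.1, p.2, hp, rfl⟩

lemma dyadicCube_eq_pi (p : DyadicIndex n) :
    dyadicCube c₀ r₀ p = univ.pi fun i => dyadicIcc (c₀ i - r₀) (2 * r₀) p.1 (p.2 i) := by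
  rw [dyadicCube, cube_eq_pi]
  refine congrArg _ (funext fun i => ?_)
  rw [dyadicIcc]
  congr 1 <;> ring

lemma measurableSet_dyadicCube (p : DyadicIndex n) : MeasurableSet (dyadicCube c₀ r₀ p) :=
  measurableSet_cube _ _

lemma volume_dyadicCube (p : DyadicIndex n) :
    volume (dyadicCube c₀ r₀ p) = ENNReal.ofReal (2 * (r₀ / 2 ^ p.1)) ^ n :=
  volume_cube _ _

lemma volume_dyadicCube_ne_top (p : DyadicIndex n) : volume (dyadicCube c₀ r₀ p) ≠ ∞ :=
  volume_cube_ne_top _ _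

lemma volume_dyadicCube_pos (hr₀ : 0 < r₀) (p : DyadicIndex n) :
    0 < volume (dyadicCube c₀ r₀ p) :=
  volume_cube_pos _ (by positivity)

lemma volume_dyadicCube_of_succ {p q : DyadicIndex n} (h : p.1 + 1 = q.1) :
    volume (dyadicCube c₀ r₀ p) = 2 ^ n * volume (dyadicCube c₀ r₀ q) := by
  rw [volume_dyadicCube, volume_dyadicCube, ← h, ← ofReal_ofNat 2, ← mul_pow,
    ← ofReal_mul zero_le_two, pow_succ]
  congr 2
  field_simp

lemma dyadicCube_subset_ancestor (hr₀ : 0 ≤ r₀) {q : DyadicIndex n} {k : ℕ} (h : k ≤ q.1) :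
    dyadicCube c₀ r₀ q ⊆ dyadicCube c₀ r₀ (ancestor q k) := by
  rw [dyadicCube_eq_pi, dyadicCube_eq_pi]
  exact pi_mono fun i _ => dyadicIcc_subset (by linarith) h _

lemma volume_dyadicCube_inter_eq_zero (hr₀ : 0 ≤ r₀) {p q : DyadicIndex n} (h : p.1 ≤ q.1)
    (hne : ancestor q p.1 ≠ p) : volume (dyadicCube c₀ r₀ q ∩ dyadicCube c₀ r₀ p) = 0 := by
  obtain ⟨i, hi⟩ : ∃ i, q.2 i / 2 ^ (q.1 - p.1) ≠ p.2 i := by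
    by_contra! hall
    exact hne (Prod.ext rfl (funext hall))
  rw [dyadicCube_eq_pi, dyadicCube_eq_pi, ← pi_inter_distrib, volume_pi_pi]
  exact Finset.prod_eq_zero (Finset.mem_univ i) (volume_dyadicIcc_inter (by linarith) h hi)

lemma exists_mem_dyadicCube (hr₀ : 0 < r₀) {p : DyadicIndex n} {k : ℕ} (hk : p.1 ≤ k) {x : Rn n}
    (hx : x ∈ dyadicCube c₀ r₀ p) : ∃ q, q.1 = k ∧ ancestor q p.1 = p ∧ x ∈ dyadicCube c₀ r₀ q := by
  rw [dyadicCube_eq_pi] at hx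
  choose j hj using fun i => exists_mem_dyadicIcc (by linarith) hk (hx i (mem_univ i))
  refine ⟨(k, j), rfl, Prod.ext rfl (funext fun i => (hj i).1), ?_⟩
  rw [dyadicCube_eq_pi]
  exact fun i _ => (hj i).2

lemma dyadicCube_subset_closedBall (hr₀ : 0 ≤ r₀) {q : DyadicIndex n} {x : Rn n}
    (hx : x ∈ dyadicCube c₀ r₀ q) :
    dyadicCube c₀ r₀ q ⊆ Metric.closedBall x (2 * (r₀ / 2 ^ q.1)) := fun y hy => by
  rw [Metric.mem_closedBall, dist_pi_le_iff (by positivity)]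
  intro i
  rw [Real.dist_eq]
  have hxi := hx i
  rw [abs_sub_comm] at hxi
  linarith [abs_sub_le (y i) (c₀ i - r₀ + (2 * (q.2 i : ℝ) + 1) * (r₀ / 2 ^ q.1)) (x i), hy i]

lemma volume_closedBall_eq_two_pow_mul (hr₀ : 0 ≤ r₀) (x : Rn n) (q : DyadicIndex n) :
    volume (Metric.closedBall x (2 * (r₀ / 2 ^ q.1))) = 2 ^ n * volume (dyadicCube c₀ r₀ q) := by
  rw [closedBall_eq_cube _ (by positivity), volume_cube, volume_dyadicCube, ← ofReal_ofNat 2,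
    ← mul_pow, ← ofReal_mul zero_le_two]

lemma two_pow_mul_inv_two_pow_mul (k : ℕ) (v : ℝ≥0∞) : 2 ^ k * (2⁻¹ ^ k * v) = v := by
  rw [← mul_assoc, ← mul_pow, ENNReal.mul_inv_cancel two_ne_zero ofNat_ne_top, one_pow, one_mul]

lemma inv_two_pow_succ_mul_two_pow_mul (v : ℝ≥0∞) : 2⁻¹ ^ (n + 1) * (2 ^ n * v) = v / 2 := by
  calc 2⁻¹ ^ (n + 1) * (2 ^ n * v) = (2 * 2⁻¹) ^ n * (2⁻¹ * v) := by ring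
    _ = v / 2 := by
      rw [ENNReal.mul_inv_cancel two_ne_zero ofNat_ne_top, one_pow, one_mul, ENNReal.div_eq_inv_mul]

section Stopping

variable {s : Set (Rn n)} {p : DyadicIndex n}

/-- The threshold `2^{-(n+1)}` is what makes a stopping cube at most half filled by `s`
(its parent, `2^n` times larger, is not heavy). -/
def IsHeavy (s Q : Set (Rn n)) : Prop := 2⁻¹ ^ (n + 1) * volume Q < volume (Q ∩ s)

lemma IsHeavy.volume_le {Q : Set (Rn n)} (h : IsHeavy s Q) :
    volume Q ≤ 2 ^ (n + 1) * volume (Q ∩ s) := by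
  calc volume Q = 2 ^ (n + 1) * (2⁻¹ ^ (n + 1) * volume Q) := (two_pow_mul_inv_two_pow_mul _ _).symm
    _ ≤ 2 ^ (n + 1) * volume (Q ∩ s) := by gcongr; exact h.le

lemma isHeavy_of_volume_diff_lt {Q : Set (Rn n)} (hQ : volume Q ≠ ∞)
    (h : volume (Q \ s) < volume Q / 2) : IsHeavy s Q := by
  have hhalf : volume Q / 2 < volume (Q ∩ s) := not_le.1 fun hle =>
    (half_le_measure_of_subset_union hQ (sdiff_union_inter Q s).symm.subset hle).not_gt h
  refine lt_of_le_of_lt ?_ hhalf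
  rw [ENNReal.div_eq_inv_mul]
  gcongr
  exact pow_le_of_le_one zero_le (ENNReal.inv_le_one.2 one_le_two) (Nat.succ_ne_zero n)

def stoppingCubes (c₀ : Rn n) (r₀ : ℝ) (s : Set (Rn n)) (p : DyadicIndex n) :
    Set (DyadicIndex n) :=
  {q | ancestor q p.1 = p ∧ p.1 < q.1 ∧ IsHeavy s (dyadicCube c₀ r₀ q) ∧
    ∀ k, p.1 ≤ k → k < q.1 → ¬IsHeavy s (dyadicCube c₀ r₀ (ancestor q k))}

lemma volume_inter_le_half_of_mem_stoppingCubes (hr₀ : 0 ≤ r₀) {q : DyadicIndex n}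
    (hq : q ∈ stoppingCubes c₀ r₀ s p) :
    volume (dyadicCube c₀ r₀ q ∩ s) ≤ volume (dyadicCube c₀ r₀ q) / 2 := by
  obtain ⟨-, hpq, -, hmax⟩ := hq
  have hparent := not_lt.1 (hmax (q.1 - 1) (by omega) (by omega))
  calc volume (dyadicCube c₀ r₀ q ∩ s)
      ≤ volume (dyadicCube c₀ r₀ (ancestor q (q.1 - 1)) ∩ s) :=
        measure_mono (inter_subset_inter_left _ (dyadicCube_subset_ancestor hr₀ (by omega)))
    _ ≤ 2⁻¹ ^ (n + 1) * volume (dyadicCube c₀ r₀ (ancestor q (q.1 - 1))) := hparent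
    _ = volume (dyadicCube c₀ r₀ q) / 2 := by
      rw [volume_dyadicCube_of_succ (q := q) (by simp only [ancestor]; omega),
        inv_two_pow_succ_mul_two_pow_mul]

lemma dyadicCube_subset_of_mem_stoppingCubes (hr₀ : 0 ≤ r₀) {q : DyadicIndex n}
    (hq : q ∈ stoppingCubes c₀ r₀ s p) : dyadicCube c₀ r₀ q ⊆ dyadicCube c₀ r₀ p :=
  hq.1 ▸ dyadicCube_subset_ancestor hr₀ hq.2.1.le

lemma eq_of_mem_stoppingCubes {q q' : DyadicIndex n} (hq : q ∈ stoppingCubes c₀ r₀ s p)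
    (hq' : q' ∈ stoppingCubes c₀ r₀ s p) (hle : q'.1 ≤ q.1) (hanc : ancestor q q'.1 = q') :
    q = q' := by
  rcases hle.lt_or_eq with hlt | heq
  · exact absurd (hanc ▸ hq'.2.2.1) (hq.2.2.2 q'.1 hq'.2.1.le hlt)
  · rw [← hanc, heq, ancestor_self]

lemma pairwise_aedisjoint_stoppingCubes (hr₀ : 0 ≤ r₀) :
    (stoppingCubes c₀ r₀ s p).Pairwise fun q q' =>
      AEDisjoint volume (dyadicCube c₀ r₀ q) (dyadicCube c₀ r₀ q') := by
  intro q hq q' hq' hne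
  wlog hle : q'.1 ≤ q.1 generalizing q q'
  · exact (this hq' hq hne.symm (by omega)).symm
  exact volume_dyadicCube_inter_eq_zero hr₀ hle fun h => hne (eq_of_mem_stoppingCubes hq hq' hle h)

lemma volume_biUnion_stoppingCubes_le (hr₀ : 0 ≤ r₀) (hs : MeasurableSet s) :
    volume (⋃ q ∈ stoppingCubes c₀ r₀ s p, dyadicCube c₀ r₀ q) ≤ 2 ^ (n + 1) * volume s := by
  have hcount := (stoppingCubes c₀ r₀ s p).to_countable
  calc volume (⋃ q ∈ stoppingCubes c₀ r₀ s p, dyadicCube c₀ r₀ q)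
      ≤ ∑' q : stoppingCubes c₀ r₀ s p, volume (dyadicCube c₀ r₀ q) :=
        measure_biUnion_le _ hcount _
    _ ≤ ∑' q : stoppingCubes c₀ r₀ s p, 2 ^ (n + 1) * volume (dyadicCube c₀ r₀ q ∩ s) :=
        ENNReal.tsum_le_tsum fun q => q.2.2.2.1.volume_le
    _ = 2 ^ (n + 1) * volume (⋃ q ∈ stoppingCubes c₀ r₀ s p, dyadicCube c₀ r₀ q ∩ s) := by
        rw [ENNReal.tsum_mul_left, measure_biUnion₀ hcount
          ((pairwise_aedisjoint_stoppingCubes hr₀).mono' fun q q' h =>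
            h.mono inter_subset_left inter_subset_left)
          fun q _ => ((measurableSet_dyadicCube q).inter hs).nullMeasurableSet]
    _ ≤ 2 ^ (n + 1) * volume s := by
        gcongr
        exact iUnion₂_subset fun q _ => inter_subset_right

lemma exists_mem_stoppingCubes_of_isHeavy (hr₀ : 0 ≤ r₀)
    (hp : ¬IsHeavy s (dyadicCube c₀ r₀ p)) {q : DyadicIndex n} (hqp : ancestor q p.1 = p)
    (hpq : p.1 ≤ q.1) (hq : IsHeavy s (dyadicCube c₀ r₀ q)) :
    ∃ q' ∈ stoppingCubes c₀ r₀ s p, dyadicCube c₀ r₀ q ⊆ dyadicCube c₀ r₀ q' := by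
  classical
  have hex : ∃ k, p.1 ≤ k ∧ k ≤ q.1 ∧ IsHeavy s (dyadicCube c₀ r₀ (ancestor q k)) :=
    ⟨q.1, hpq, le_rfl, by rwa [ancestor_self]⟩
  obtain ⟨hk₁, hk₂, hheavy⟩ := Nat.find_spec hex
  have hpk : p.1 < Nat.find hex :=
    lt_of_le_of_ne hk₁ fun h => hp (by rwa [← h, hqp] at hheavy)
  refine ⟨ancestor q (Nat.find hex), ⟨by rw [ancestor_ancestor hk₁ hk₂, hqp], hpk, hheavy,
    fun k hk hkk hheavy' => ?_⟩, dyadicCube_subset_ancestor hr₀ hk₂⟩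
  rw [ancestor_ancestor (k' := Nat.find hex) hkk.le hk₂] at hheavy'
  exact Nat.find_min hex hkk ⟨hk, hkk.le.trans hk₂, hheavy'⟩

lemma ae_eventually_isHeavy (hr₀ : 0 < r₀) (hs : MeasurableSet s) :
    ∀ᵐ x, x ∈ s → ∀ᶠ k in atTop, ∀ q : DyadicIndex n, q.1 = k → x ∈ dyadicCube c₀ r₀ q →
      IsHeavy s (dyadicCube c₀ r₀ q) := by
  have hρ : Tendsto (fun k : ℕ => 2 * (r₀ / 2 ^ k)) atTop (𝓝[>] 0) :=
    tendsto_nhdsWithin_iff.2 ⟨by simpa only [mul_zero] using (tendsto_const_nhds.div_atTop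
      (tendsto_pow_atTop_atTop_of_one_lt (one_lt_two : (1 : ℝ) < 2))).const_mul 2,
      Eventually.of_forall fun k => mem_Ioi.2 (by positivity)⟩
  filter_upwards [Besicovitch.ae_tendsto_measure_inter_div_of_measurableSet volume hs.compl]
    with x hx hxs
  rw [indicator_of_notMem (not_not_intro hxs)] at hx
  filter_upwards [hρ.eventually (hx.eventually (gt_mem_nhds (ENNReal.pow_pos
    (ENNReal.inv_pos.2 (ofNat_ne_top (n := 2))) (n + 1))))] with k hk q hqk hxq
  subst hqk
  refine isHeavy_of_volume_diff_lt (volume_dyadicCube_ne_top q) ?_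
  have hball := volume_closedBall_eq_two_pow_mul (c₀ := c₀) hr₀.le x q
  calc volume (dyadicCube c₀ r₀ q \ s)
      ≤ volume (sᶜ ∩ Metric.closedBall x (2 * (r₀ / 2 ^ q.1))) :=
        measure_mono fun y hy => ⟨hy.2, dyadicCube_subset_closedBall hr₀.le hxq hy.1⟩
    _ < 2⁻¹ ^ (n + 1) * volume (Metric.closedBall x (2 * (r₀ / 2 ^ q.1))) := by
        refine (ENNReal.div_lt_iff (Or.inl ?_) (Or.inl ?_)).1 hk
        · rw [hball]
          exact mul_ne_zero (by simp) (volume_dyadicCube_pos hr₀ q).ne'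
        · rw [hball]
          exact ENNReal.mul_ne_top (by simp) (volume_dyadicCube_ne_top q)
    _ = volume (dyadicCube c₀ r₀ q) / 2 := by rw [hball, inv_two_pow_succ_mul_two_pow_mul]

lemma ae_mem_biUnion_stoppingCubes (hr₀ : 0 < r₀) (hs : MeasurableSet s)
    (hp : ¬IsHeavy s (dyadicCube c₀ r₀ p)) :
    ∀ᵐ x, x ∈ s → x ∈ dyadicCube c₀ r₀ p →
      x ∈ ⋃ q ∈ stoppingCubes c₀ r₀ s p, dyadicCube c₀ r₀ q := by
  filter_upwards [ae_eventually_isHeavy hr₀ hs] with x hx hxs hxp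
  obtain ⟨k, hk, hpk⟩ := ((hx hxs).and (eventually_ge_atTop p.1)).exists
  obtain ⟨q, rfl, hqp, hxq⟩ := exists_mem_dyadicCube hr₀ hpk hxp
  obtain ⟨q', hq', hsub⟩ := exists_mem_stoppingCubes_of_isHeavy hr₀.le hp hqp hpk (hk q rfl hxq)
  exact mem_biUnion hq' (hsub hxq)

end Stopping

variable {f : Rn n → ℝ} {m : ℝ}

/-- A dyadic cube together with a median of `f` on it. -/
abbrev Node (n : ℕ) := DyadicIndex n × ℝ

def exceptionalSet (f : Rn n → ℝ) (c₀ : Rn n) (r₀ : ℝ) (nd : Node n) : Set (Rn n) :=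
  {x ∈ dyadicCube c₀ r₀ nd.1 |
    2 * osc (1 / 2 ^ (n + 2)) f (dyadicCube c₀ r₀ nd.1) < |f x - nd.2|}

def childIndices (f : Rn n → ℝ) (c₀ : Rn n) (r₀ : ℝ) (nd : Node n) : Set (DyadicIndex n) :=
  stoppingCubes c₀ r₀ (exceptionalSet f c₀ r₀ nd) nd.1

lemma measurableSet_exceptionalSet (hf : Measurable f) (nd : Node n) :
    MeasurableSet (exceptionalSet f c₀ r₀ nd) :=
  (measurableSet_dyadicCube nd.1).inter (measurableSet_lt measurable_const (hf.sub_const _).abs)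

lemma volume_exceptionalSet_le (hf : Measurable f) (hr₀ : 0 < r₀) {nd : Node n}
    (hnd : IsMedian f (dyadicCube c₀ r₀ nd.1) nd.2) :
    volume (exceptionalSet f c₀ r₀ nd) ≤ 2⁻¹ ^ (n + 2) * volume (dyadicCube c₀ r₀ nd.1) := by
  have hlam : (1 : ℝ) / 2 ^ (n + 2) < 1 / 2 :=
    one_div_lt_one_div_of_lt two_pos (lt_self_pow₀ one_lt_two (by omega))
  have h := hnd.volume_two_osc_lt_abs_sub_le hf (measurableSet_dyadicCube _)
    (volume_dyadicCube_ne_top _) (volume_dyadicCube_pos hr₀ _) (by positivity) hlam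
  have hofReal : ENNReal.ofReal (1 / 2 ^ (n + 2)) = 2⁻¹ ^ (n + 2) := by
    rw [one_div, ← inv_pow, ofReal_pow (by norm_num), ofReal_inv_of_pos two_pos, ofReal_ofNat]
  rwa [hofReal] at h

lemma not_isHeavy_exceptionalSet (hf : Measurable f) (hr₀ : 0 < r₀) {nd : Node n}
    (hnd : IsMedian f (dyadicCube c₀ r₀ nd.1) nd.2) :
    ¬IsHeavy (exceptionalSet f c₀ r₀ nd) (dyadicCube c₀ r₀ nd.1) := by
  refine not_lt.2 ((measure_mono inter_subset_right).trans
    ((volume_exceptionalSet_le hf hr₀ hnd).trans (mul_le_mul_of_nonneg_right ?_ zero_le)))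
  exact pow_le_pow_of_le_one zero_le (ENNReal.inv_le_one.2 one_le_two) (Nat.le_succ _)

lemma dyadicCube_ne_of_mem_childIndices (hf : Measurable f) (hr₀ : 0 < r₀) {nd : Node n}
    (hnd : IsMedian f (dyadicCube c₀ r₀ nd.1) nd.2) {q : DyadicIndex n}
    (hq : q ∈ childIndices f c₀ r₀ nd) : dyadicCube c₀ r₀ q ≠ dyadicCube c₀ r₀ nd.1 :=
  fun h => not_isHeavy_exceptionalSet hf hr₀ hnd (h ▸ hq.2.2.1)

lemma volume_biUnion_childIndices_le (hf : Measurable f) (hr₀ : 0 < r₀) {nd : Node n}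
    (hnd : IsMedian f (dyadicCube c₀ r₀ nd.1) nd.2) :
    volume (⋃ q ∈ childIndices f c₀ r₀ nd, dyadicCube c₀ r₀ q) ≤
      volume (dyadicCube c₀ r₀ nd.1) / 2 :=
  calc volume (⋃ q ∈ childIndices f c₀ r₀ nd, dyadicCube c₀ r₀ q)
      ≤ 2 ^ (n + 1) * volume (exceptionalSet f c₀ r₀ nd) :=
        volume_biUnion_stoppingCubes_le hr₀.le (measurableSet_exceptionalSet hf nd)
    _ ≤ 2 ^ (n + 1) * (2⁻¹ ^ (n + 2) * volume (dyadicCube c₀ r₀ nd.1)) := by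
        gcongr
        exact volume_exceptionalSet_le hf hr₀ hnd
    _ = volume (dyadicCube c₀ r₀ nd.1) / 2 := by
        rw [pow_succ (2⁻¹ : ℝ≥0∞), mul_assoc, two_pow_mul_inv_two_pow_mul, ENNReal.div_eq_inv_mul]

lemma exists_isMedian_child (hf : Measurable f) (hr₀ : 0 < r₀) {nd : Node n} {q : DyadicIndex n}
    (hq : q ∈ childIndices f c₀ r₀ nd) :
    ∃ m', IsMedian f (dyadicCube c₀ r₀ q) m' ∧
      |m' - nd.2| ≤ 2 * osc (1 / 2 ^ (n + 2)) f (dyadicCube c₀ r₀ nd.1) := by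
  obtain ⟨m₀, hm₀⟩ := exists_isMedian hf (measurableSet_dyadicCube q)
    (volume_dyadicCube_ne_top q) (volume_dyadicCube_pos hr₀ q)
  refine hm₀.exists_isMedian_abs_sub_le ?_ (mul_nonneg zero_le_two (osc_nonneg _ _ _))
  have hsub := dyadicCube_subset_of_mem_stoppingCubes hr₀.le hq
  calc volume {x ∈ dyadicCube c₀ r₀ q |
        2 * osc (1 / 2 ^ (n + 2)) f (dyadicCube c₀ r₀ nd.1) < |f x - nd.2|}
      ≤ volume (dyadicCube c₀ r₀ q ∩ exceptionalSet f c₀ r₀ nd) :=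
        measure_mono fun x hx => ⟨hx.1, hsub hx.1, hx.2⟩
    _ ≤ volume (dyadicCube c₀ r₀ q) / 2 := volume_inter_le_half_of_mem_stoppingCubes hr₀.le hq

def childMedian (f : Rn n → ℝ) (c₀ : Rn n) (r₀ : ℝ) (nd : Node n) (q : DyadicIndex n) : ℝ :=
  Classical.epsilon fun m' => IsMedian f (dyadicCube c₀ r₀ q) m' ∧
    |m' - nd.2| ≤ 2 * osc (1 / 2 ^ (n + 2)) f (dyadicCube c₀ r₀ nd.1)

lemma childMedian_spec (hf : Measurable f) (hr₀ : 0 < r₀) {nd : Node n} {q : DyadicIndex n}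
    (hq : q ∈ childIndices f c₀ r₀ nd) :
    IsMedian f (dyadicCube c₀ r₀ q) (childMedian f c₀ r₀ nd q) ∧
      |childMedian f c₀ r₀ nd q - nd.2| ≤ 2 * osc (1 / 2 ^ (n + 2)) f (dyadicCube c₀ r₀ nd.1) :=
  Classical.epsilon_spec (exists_isMedian_child hf hr₀ hq)

def generation (f : Rn n → ℝ) (c₀ : Rn n) (r₀ m : ℝ) : ℕ → Set (Node n)
  | 0 => {(0, m)}
  | k + 1 => ⋃ nd ∈ generation f c₀ r₀ m k,
      (fun q => (q, childMedian f c₀ r₀ nd q)) '' childIndices f c₀ r₀ nd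

def generationUnion (f : Rn n → ℝ) (c₀ : Rn n) (r₀ m : ℝ) (k : ℕ) : Set (Rn n) :=
  ⋃ nd ∈ generation f c₀ r₀ m k, dyadicCube c₀ r₀ nd.1

lemma mem_generation_succ {k : ℕ} {nd' : Node n} :
    nd' ∈ generation f c₀ r₀ m (k + 1) ↔ ∃ nd ∈ generation f c₀ r₀ m k,
      ∃ q ∈ childIndices f c₀ r₀ nd, (q, childMedian f c₀ r₀ nd q) = nd' := by
  simp only [generation, mem_iUnion, mem_image, exists_prop]

lemma isDyadicIndex_of_mem_generation :
    ∀ {k : ℕ} {nd : Node n}, nd ∈ generation f c₀ r₀ m k → IsDyadicIndex nd.1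
  | 0, _, hnd => by
    rw [generation, mem_singleton_iff] at hnd
    exact hnd ▸ isDyadicIndex_zero
  | k + 1, _, hchild => by
    obtain ⟨nd, hnd, q, hq, rfl⟩ := mem_generation_succ.1 hchild
    have hpar := isDyadicIndex_of_mem_generation hnd
    rw [← hq.1] at hpar
    exact IsDyadicIndex.of_ancestor hq.2.1.le hpar

lemma isMedian_of_mem_generation (hf : Measurable f) (hr₀ : 0 < r₀)
    (hm : IsMedian f (cube n c₀ r₀) m) :
    ∀ {k : ℕ} {nd : Node n}, nd ∈ generation f c₀ r₀ m k →
      IsMedian f (dyadicCube c₀ r₀ nd.1) nd.2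
  | 0, _, hnd => by
    rw [generation, mem_singleton_iff] at hnd
    rwa [hnd, dyadicCube_zero]
  | k + 1, _, hchild => by
    obtain ⟨nd, -, q, hq, rfl⟩ := mem_generation_succ.1 hchild
    exact (childMedian_spec hf hr₀ hq).1

lemma countable_generation : ∀ k, (generation f c₀ r₀ m k).Countable
  | 0 => countable_singleton _
  | k + 1 => (countable_generation k).biUnion fun _ _ => (to_countable _).image _

lemma pairwise_aedisjoint_generation (hr₀ : 0 ≤ r₀) : ∀ k, (generation f c₀ r₀ m k).Pairwise
    fun nd nd' => AEDisjoint volume (dyadicCube c₀ r₀ nd.1) (dyadicCube c₀ r₀ nd'.1)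
  | 0 => by simp only [generation, pairwise_singleton]
  | k + 1 => by
    rintro _ hchild _ hchild' hne
    obtain ⟨nd, hnd, q, hq, rfl⟩ := mem_generation_succ.1 hchild
    obtain ⟨nd', hnd', q', hq', rfl⟩ := mem_generation_succ.1 hchild'
    by_cases h : nd = nd'
    · subst h
      exact pairwise_aedisjoint_stoppingCubes hr₀ hq hq' fun hqq => hne (by rw [hqq])
    · exact (pairwise_aedisjoint_generation hr₀ k hnd hnd' h).mono
        (dyadicCube_subset_of_mem_stoppingCubes hr₀ hq)
        (dyadicCube_subset_of_mem_stoppingCubes hr₀ hq')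

lemma exists_ancestor_mem_generation (hr₀ : 0 ≤ r₀) {k k' : ℕ} (hkk : k ≤ k') {nd' : Node n}
    (hnd' : nd' ∈ generation f c₀ r₀ m k') :
    ∃ nd ∈ generation f c₀ r₀ m k, dyadicCube c₀ r₀ nd'.1 ⊆ dyadicCube c₀ r₀ nd.1 := by
  induction k', hkk using Nat.le_induction generalizing nd' with
  | base => exact ⟨nd', hnd', subset_rfl⟩
  | succ k' _ ih =>
    obtain ⟨pr, hpr, q, hq, rfl⟩ := mem_generation_succ.1 hnd'
    obtain ⟨nd, hnd, hsub⟩ := ih hpr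
    exact ⟨nd, hnd, (dyadicCube_subset_of_mem_stoppingCubes hr₀ hq).trans hsub⟩

lemma volume_generationUnion_le (hf : Measurable f) (hr₀ : 0 < r₀)
    (hm : IsMedian f (cube n c₀ r₀) m) :
    ∀ k, volume (generationUnion f c₀ r₀ m k) ≤ 2⁻¹ ^ k * volume (cube n c₀ r₀)
  | 0 => by
    simp only [generationUnion, generation, mem_singleton_iff, iUnion_iUnion_eq_left,
      dyadicCube_zero, pow_zero, one_mul, le_refl]
  | k + 1 => by
    have hcount := countable_generation (f := f) (c₀ := c₀) (r₀ := r₀) (m := m) k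
    have hsub : generationUnion f c₀ r₀ m (k + 1) ⊆
        ⋃ nd ∈ generation f c₀ r₀ m k, ⋃ q ∈ childIndices f c₀ r₀ nd, dyadicCube c₀ r₀ q := by
      intro x hx
      obtain ⟨nd', hnd', hx⟩ := mem_iUnion₂.1 hx
      obtain ⟨nd, hnd, q, hq, rfl⟩ := mem_generation_succ.1 hnd'
      exact mem_biUnion hnd (mem_biUnion hq hx)
    calc volume (generationUnion f c₀ r₀ m (k + 1))
        ≤ ∑' nd : generation f c₀ r₀ m k,
            volume (⋃ q ∈ childIndices f c₀ r₀ nd, dyadicCube c₀ r₀ q) :=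
          (measure_mono hsub).trans (measure_biUnion_le _ hcount _)
      _ ≤ ∑' nd : generation f c₀ r₀ m k, 2⁻¹ * volume (dyadicCube c₀ r₀ nd.1.1) :=
          ENNReal.tsum_le_tsum fun nd => by
            rw [← ENNReal.div_eq_inv_mul]
            exact volume_biUnion_childIndices_le hf hr₀ (isMedian_of_mem_generation hf hr₀ hm nd.2)
      _ = 2⁻¹ * volume (generationUnion f c₀ r₀ m k) := by
          rw [ENNReal.tsum_mul_left, generationUnion, measure_biUnion₀ hcount
            (pairwise_aedisjoint_generation hr₀.le k)
            fun nd _ => (measurableSet_dyadicCube _).nullMeasurableSet]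
      _ ≤ 2⁻¹ ^ (k + 1) * volume (cube n c₀ r₀) := by
          rw [pow_succ', mul_assoc]
          gcongr
          exact volume_generationUnion_le hf hr₀ hm k

lemma volume_iInter_generationUnion (hf : Measurable f) (hr₀ : 0 < r₀)
    (hm : IsMedian f (cube n c₀ r₀) m) : volume (⋂ k, generationUnion f c₀ r₀ m k) = 0 := by
  have hlim := ENNReal.Tendsto.mul_const (ENNReal.tendsto_pow_atTop_nhds_zero_of_lt_one
    (ENNReal.inv_lt_one.2 one_lt_two)) (Or.inr (volume_cube_ne_top c₀ r₀))
  rw [zero_mul] at hlim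
  exact le_antisymm (ge_of_tendsto' hlim fun k => (measure_mono (iInter_subset _ k)).trans
    (volume_generationUnion_le hf hr₀ hm k)) zero_le

/-- Closed dyadic cubes overlap on their boundaries; this null set collects all such overlaps. -/
def dyadicOverlap (c₀ : Rn n) (r₀ : ℝ) : Set (Rn n) :=
  ⋃ (p : DyadicIndex n) (q : DyadicIndex n)
    (_ : volume (dyadicCube c₀ r₀ p ∩ dyadicCube c₀ r₀ q) = 0),
    dyadicCube c₀ r₀ p ∩ dyadicCube c₀ r₀ q

lemma volume_dyadicOverlap : volume (dyadicOverlap c₀ r₀) = 0 :=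
  measure_iUnion_null fun _ => measure_iUnion_null fun _ => measure_iUnion_null id

lemma measurableSet_dyadicOverlap : MeasurableSet (dyadicOverlap c₀ r₀) :=
  .iUnion fun p => .iUnion fun q => .iUnion fun _ =>
    (measurableSet_dyadicCube p).inter (measurableSet_dyadicCube q)

lemma eq_of_mem_generation_of_notMem_dyadicOverlap (hr₀ : 0 ≤ r₀) {k : ℕ} {nd nd' : Node n}
    (hnd : nd ∈ generation f c₀ r₀ m k) (hnd' : nd' ∈ generation f c₀ r₀ m k) {x : Rn n}
    (hx : x ∈ dyadicCube c₀ r₀ nd.1) (hx' : x ∈ dyadicCube c₀ r₀ nd'.1)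
    (hN : x ∉ dyadicOverlap c₀ r₀) : nd = nd' := by
  by_contra hne
  refine hN ?_
  simp only [dyadicOverlap, mem_iUnion]
  exact ⟨nd.1, nd'.1, pairwise_aedisjoint_generation hr₀ k hnd hnd' hne, hx, hx'⟩

def sparseFamily (f : Rn n → ℝ) (c₀ : Rn n) (r₀ m : ℝ) : Set (Set (Rn n)) :=
  {Q | ∃ k, ∃ nd ∈ generation f c₀ r₀ m k, Q = dyadicCube c₀ r₀ nd.1}

lemma sparseFamily_subset_dyadicSub : sparseFamily f c₀ r₀ m ⊆ dyadicSub n c₀ r₀ := by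
  rintro _ ⟨k, nd, hnd, rfl⟩
  exact mem_dyadicSub (isDyadicIndex_of_mem_generation hnd)

lemma countable_sparseFamily : (sparseFamily f c₀ r₀ m).Countable := by
  refine (countable_iUnion fun k => (countable_generation (f := f) (c₀ := c₀) (r₀ := r₀) (m := m)
    k).image fun nd => dyadicCube c₀ r₀ nd.1).mono ?_
  rintro _ ⟨k, nd, hnd, rfl⟩
  exact mem_iUnion.2 ⟨k, mem_image_of_mem _ hnd⟩

lemma subset_or_subset_of_mem_sparseFamily (hr₀ : 0 ≤ r₀) {C C' : Set (Rn n)}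
    (hC : C ∈ sparseFamily f c₀ r₀ m) (hC' : C' ∈ sparseFamily f c₀ r₀ m) {x : Rn n}
    (hx : x ∈ C) (hx' : x ∈ C') (hN : x ∉ dyadicOverlap c₀ r₀) : C ⊆ C' ∨ C' ⊆ C := by
  obtain ⟨k, nd, hnd, rfl⟩ := hC
  obtain ⟨k', nd', hnd', rfl⟩ := hC'
  rcases le_total k k' with hkk | hkk
  · obtain ⟨a, ha, hsub⟩ := exists_ancestor_mem_generation hr₀ hkk hnd'
    exact Or.inr (eq_of_mem_generation_of_notMem_dyadicOverlap hr₀ ha hnd (hsub hx') hx hN ▸ hsub)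
  · obtain ⟨a, ha, hsub⟩ := exists_ancestor_mem_generation hr₀ hkk hnd
    exact Or.inl (eq_of_mem_generation_of_notMem_dyadicOverlap hr₀ ha hnd' (hsub hx) hx' hN ▸ hsub)

lemma mem_biUnion_childIndices_of_ssubset (hr₀ : 0 ≤ r₀) {k : ℕ} {nd : Node n}
    (hnd : nd ∈ generation f c₀ r₀ m k) {C : Set (Rn n)} (hC : C ∈ sparseFamily f c₀ r₀ m)
    (hss : C ⊂ dyadicCube c₀ r₀ nd.1) {x : Rn n} (hx : x ∈ C) (hN : x ∉ dyadicOverlap c₀ r₀) :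
    x ∈ ⋃ q ∈ childIndices f c₀ r₀ nd, dyadicCube c₀ r₀ q := by
  obtain ⟨k', nd', hnd', rfl⟩ := hC
  rcases le_or_gt k' k with hkk | hkk
  · obtain ⟨a, ha, hsub⟩ := exists_ancestor_mem_generation hr₀ hkk hnd
    have := eq_of_mem_generation_of_notMem_dyadicOverlap hr₀ hnd' ha hx (hsub (hss.1 hx)) hN
    exact absurd (this ▸ hsub) hss.2
  · obtain ⟨b, hb, hsub⟩ := exists_ancestor_mem_generation hr₀ hkk hnd'
    obtain ⟨pr, hpr, q, hq, rfl⟩ := mem_generation_succ.1 hb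
    have hxq := hsub hx
    obtain rfl := eq_of_mem_generation_of_notMem_dyadicOverlap hr₀ hpr hnd
      (dyadicCube_subset_of_mem_stoppingCubes hr₀ hq hxq) (hss.1 hx) hN
    exact mem_biUnion hq hxq

def sparsePart (f : Rn n → ℝ) (c₀ : Rn n) (r₀ m : ℝ) (C : Set (Rn n)) : Set (Rn n) :=
  C \ (dyadicOverlap c₀ r₀ ∪ ⋃₀ {C' ∈ sparseFamily f c₀ r₀ m | C' ⊂ C})

lemma measurableSet_sparsePart {C : Set (Rn n)} (hC : C ∈ sparseFamily f c₀ r₀ m) :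
    MeasurableSet (sparsePart f c₀ r₀ m C) := by
  refine MeasurableSet.diff ?_ (measurableSet_dyadicOverlap.union
    (.sUnion (countable_sparseFamily.mono (sep_subset _ _)) fun C' hC' => ?_))
  · obtain ⟨_, nd, _, rfl⟩ := hC
    exact measurableSet_dyadicCube _
  · obtain ⟨_, nd', _, rfl⟩ := hC'.1
    exact measurableSet_dyadicCube _

lemma volume_le_two_mul_sparsePart (hf : Measurable f) (hr₀ : 0 < r₀)
    (hm : IsMedian f (cube n c₀ r₀) m) {C : Set (Rn n)} (hC : C ∈ sparseFamily f c₀ r₀ m) :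
    volume C ≤ 2 * volume (sparsePart f c₀ r₀ m C) := by
  obtain ⟨k, nd, hnd, rfl⟩ := hC
  set D := dyadicCube c₀ r₀ nd.1
  set U := dyadicOverlap c₀ r₀ ∪ ⋃ q ∈ childIndices f c₀ r₀ nd, dyadicCube c₀ r₀ q
  have hsub : D \ U ⊆ sparsePart f c₀ r₀ m D := by
    refine sdiff_subset_sdiff_right (union_subset subset_union_left fun x hx => ?_)
    by_cases hN : x ∈ dyadicOverlap c₀ r₀
    · exact Or.inl hN
    · obtain ⟨C', hC', hxC'⟩ := hx
      exact Or.inr (mem_biUnion_childIndices_of_ssubset hr₀.le hnd hC'.1 hC'.2 hxC' hN)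
  have hU : volume U ≤ volume D / 2 := by
    refine (measure_union_le _ _).trans ?_
    rw [volume_dyadicOverlap, zero_add]
    exact volume_biUnion_childIndices_le hf hr₀ (isMedian_of_mem_generation hf hr₀ hm hnd)
  calc volume D = 2 * (volume D - volume D / 2) := by
        rw [ENNReal.sub_half (volume_dyadicCube_ne_top _),
          ENNReal.mul_div_cancel two_ne_zero ofNat_ne_top]
    _ ≤ 2 * volume (sparsePart f c₀ r₀ m D) := by
        gcongr
        exact (tsub_le_tsub_left hU _).trans (le_measure_sdiff.trans (measure_mono hsub))

lemma pairwiseDisjoint_sparsePart (hr₀ : 0 ≤ r₀) :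
    (sparseFamily f c₀ r₀ m).PairwiseDisjoint (sparsePart f c₀ r₀ m) := by
  intro C hC C' hC' hne
  refine disjoint_left.2 fun x hx hx' => ?_
  have hN : x ∉ dyadicOverlap c₀ r₀ := fun h => hx.2 (Or.inl h)
  rcases subset_or_subset_of_mem_sparseFamily hr₀ hC hC' hx.1 hx'.1 hN with h | h
  · exact hx'.2 (Or.inr ⟨C, ⟨hC, h.ssubset_of_ne hne⟩, hx.1⟩)
  · exact hx.2 (Or.inr ⟨C', ⟨hC', h.ssubset_of_ne hne.symm⟩, hx'.1⟩)

lemma isSparse_sparseFamily (hf : Measurable f) (hr₀ : 0 < r₀)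
    (hm : IsMedian f (cube n c₀ r₀) m) : IsSparse n (sparseFamily f c₀ r₀ m) :=
  ⟨sparsePart f c₀ r₀ m, fun _ hC => ⟨sdiff_subset, measurableSet_sparsePart hC,
    volume_le_two_mul_sparsePart hf hr₀ hm hC⟩, pairwiseDisjoint_sparsePart hr₀.le⟩

lemma ofReal_abs_sub_le_of_notMem_exceptionalSet {nd : Node n} {x : Rn n}
    (hx : x ∈ dyadicCube c₀ r₀ nd.1) (hΩ : x ∉ exceptionalSet f c₀ r₀ nd) :
    ENNReal.ofReal |f x - nd.2| ≤
      2 * ENNReal.ofReal (osc (1 / 2 ^ (n + 2)) f (dyadicCube c₀ r₀ nd.1)) := by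
  rw [← ofReal_ofNat 2, ← ofReal_mul zero_le_two]
  exact ofReal_le_ofReal (not_lt.1 fun h => hΩ ⟨hx, h⟩)

lemma ofReal_abs_sub_le_childMedian (hf : Measurable f) (hr₀ : 0 < r₀) {nd : Node n}
    {q : DyadicIndex n} (hq : q ∈ childIndices f c₀ r₀ nd) (x : Rn n) :
    ENNReal.ofReal |f x - nd.2| ≤ ENNReal.ofReal |f x - childMedian f c₀ r₀ nd q| +
      2 * ENNReal.ofReal (osc (1 / 2 ^ (n + 2)) f (dyadicCube c₀ r₀ nd.1)) := by
  rw [← ofReal_ofNat 2, ← ofReal_mul zero_le_two]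
  refine (ofReal_le_ofReal ?_).trans ofReal_add_le
  linarith [abs_sub_le (f x) (childMedian f c₀ r₀ nd q) nd.2, (childMedian_spec hf hr₀ hq).2]

/-- Telescoping along the chain of cubes of the construction that contain `x`; the chain ends by
generation `k + j` because `x` is not covered there. -/
lemma exists_finset_abs_sub_le (hf : Measurable f) (hr₀ : 0 < r₀) (hm : IsMedian f (cube n c₀ r₀) m)
    {x : Rn n} (hcover : ∀ k, ∀ nd ∈ generation f c₀ r₀ m k, x ∈ exceptionalSet f c₀ r₀ nd →
      x ∈ ⋃ q ∈ childIndices f c₀ r₀ nd, dyadicCube c₀ r₀ q) :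
    ∀ j k, ∀ nd ∈ generation f c₀ r₀ m k, x ∈ dyadicCube c₀ r₀ nd.1 →
      x ∉ generationUnion f c₀ r₀ m (k + j) →
      ∃ F : Finset (sparseFamily f c₀ r₀ m),
        (∀ Q ∈ F, x ∈ (Q : Set (Rn n)) ∧ (Q : Set (Rn n)) ⊆ dyadicCube c₀ r₀ nd.1) ∧
        ENNReal.ofReal |f x - nd.2| ≤ 2 * ∑ Q ∈ F, ENNReal.ofReal (osc (1 / 2 ^ (n + 2)) f Q)
  | 0, _, nd, hnd, hx, hK => absurd (mem_biUnion hnd hx) hK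
  | j + 1, k, nd, hnd, hx, hK => by
    set C : sparseFamily f c₀ r₀ m := ⟨dyadicCube c₀ r₀ nd.1, k, nd, hnd, rfl⟩
    by_cases hΩ : x ∈ exceptionalSet f c₀ r₀ nd
    · obtain ⟨q, hq, hxq⟩ := mem_iUnion₂.1 (hcover k nd hnd hΩ)
      have hchild : (q, childMedian f c₀ r₀ nd q) ∈ generation f c₀ r₀ m (k + 1) :=
        mem_generation_succ.2 ⟨nd, hnd, q, hq, rfl⟩
      obtain ⟨F, hF, hsum⟩ := exists_finset_abs_sub_le hf hr₀ hm hcover j (k + 1) _ hchild hxq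
        (by rwa [add_right_comm, add_assoc])
      have hqsub := dyadicCube_subset_of_mem_stoppingCubes hr₀.le hq
      have hCF : C ∉ F := fun hC => dyadicCube_ne_of_mem_childIndices hf hr₀
        (isMedian_of_mem_generation hf hr₀ hm hnd) hq (hqsub.antisymm (hF C hC).2)
      refine ⟨insert C F, fun Q hQ => ?_, ?_⟩
      · rcases Finset.mem_insert.1 hQ with rfl | hQ
        · exact ⟨hx, subset_rfl⟩
        · exact ⟨(hF Q hQ).1, (hF Q hQ).2.trans hqsub⟩
      · rw [Finset.sum_insert hCF, mul_add, add_comm]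
        exact (ofReal_abs_sub_le_childMedian hf hr₀ hq x).trans (by gcongr)
    · refine ⟨{C}, fun Q hQ => ?_, ?_⟩
      · rw [Finset.mem_singleton.1 hQ]
        exact ⟨hx, subset_rfl⟩
      · rw [Finset.sum_singleton]
        exact ofReal_abs_sub_le_of_notMem_exceptionalSet hx hΩ

lemma ae_abs_sub_median_le (hf : Measurable f) (hr₀ : 0 < r₀)
    (hm : IsMedian f (cube n c₀ r₀) m) :
    ∀ᵐ x, x ∈ cube n c₀ r₀ → ENNReal.ofReal |f x - m| ≤
      2 * ∑' Q : sparseFamily f c₀ r₀ m, indicator (Q : Set (Rn n))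
        (fun _ => ENNReal.ofReal (osc (1 / 2 ^ (n + 2)) f (Q : Set (Rn n)))) x := by
  have hcover : ∀ᵐ x, ∀ k, ∀ nd ∈ generation f c₀ r₀ m k, x ∈ exceptionalSet f c₀ r₀ nd →
      x ∈ ⋃ q ∈ childIndices f c₀ r₀ nd, dyadicCube c₀ r₀ q := by
    refine ae_all_iff.2 fun k => (ae_ball_iff (countable_generation k)).2 fun nd hnd => ?_
    filter_upwards [ae_mem_biUnion_stoppingCubes hr₀ (measurableSet_exceptionalSet hf nd)
      (not_isHeavy_exceptionalSet hf hr₀ (isMedian_of_mem_generation hf hr₀ hm hnd))]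
      with x hx hxΩ using hx hxΩ hxΩ.1
  filter_upwards [hcover, measure_eq_zero_iff_ae_notMem.1 (volume_iInter_generationUnion hf hr₀ hm)]
    with x hx hxG hxQ
  obtain ⟨K, hK⟩ : ∃ K, x ∉ generationUnion f c₀ r₀ m K := by
    simpa only [mem_iInter, not_forall] using hxG
  obtain ⟨F, hF, hsum⟩ := exists_finset_abs_sub_le hf hr₀ hm hx K 0 (0, m) rfl
    (by rwa [dyadicCube_zero]) (by rwa [zero_add])
  calc ENNReal.ofReal |f x - m|
      ≤ 2 * ∑ Q ∈ F, ENNReal.ofReal (osc (1 / 2 ^ (n + 2)) f Q) := hsum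
    _ = 2 * ∑ Q ∈ F, indicator (Q : Set (Rn n))
          (fun _ => ENNReal.ofReal (osc (1 / 2 ^ (n + 2)) f (Q : Set (Rn n)))) x := by
        congr 1
        exact Finset.sum_congr rfl fun Q hQ => by rw [indicator_of_mem (hF Q hQ).1]
    _ ≤ _ := by gcongr; exact ENNReal.sum_le_tsum F

end MeanOscillation

/-- local mean oscillation decomposition: for measurable `f` and a cube
`Q₀` there is a sparse family `S` of dyadic subcubes of `Q₀` such that a.e. on `Q₀`,
`|f - m_f(Q₀)| ≤ 2 Σ_{Q∈S} ω_{2^{-(n+2)}}(f;Q) χ_Q`. -/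
theorem stmt14 (n : ℕ) (f : Rn n → ℝ) (hf : Measurable f) (c₀ : Rn n) (r₀ : ℝ)
    (hr₀ : 0 < r₀) (m : ℝ) (hm : IsMedian f (cube n c₀ r₀) m) :
    ∃ S : Set (Set (Rn n)), S ⊆ dyadicSub n c₀ r₀ ∧ IsSparse n S ∧
      ∀ᵐ x : Rn n, x ∈ cube n c₀ r₀ →
        ENNReal.ofReal |f x - m| ≤
          2 * ∑' Q : S, Set.indicator (Q : Set (Rn n))
            (fun _ => ENNReal.ofReal (osc ((1 : ℝ) / 2 ^ (n + 2)) f (Q : Set (Rn n)))) x :=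
  ⟨MeanOscillation.sparseFamily f c₀ r₀ m, MeanOscillation.sparseFamily_subset_dyadicSub,
    MeanOscillation.isSparse_sparseFamily hf hr₀ hm, MeanOscillation.ae_abs_sub_median_le hf hr₀ hm⟩
end
end
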